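/- arXiv:1507.06121 — 6 statements merged into one kernel-verified Lean document; each statement's English description precedes it below -/
import Mathlib

section
/- For a real-valued random variable X with continuous c.d.f. F and finite expectation, and i.i.d. copies X_1,...,X_i of X, the probability weighted moment β_i = E[X·F(X)^{i-1}] satisfies β_i = (1/i)·E[max(X_1,...,X_i)] for each i ≥ 1. -/
open MeasureTheory ProbabilityTheory Set

/-!
Continuity of `F` means the law `μ` of `X` has no atoms, so under the product law the
coordinates of `(X_1, …, X_i)` are almost surely distinct, and then
`max_j x_j = ∑_k x_k · 1{x_j ≤ x_k for all j}` almost everywhere. Integrating the `k`-th term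
first over the other `i - 1` coordinates (Fubini) gives `x_k F(x_k)^(i-1)`, so each of the `i`
terms has expectation `β_i`.
-/

theorem nullSingletonClass_of_continuous_cdf {μ : Measure ℝ} [IsProbabilityMeasure μ]
    (h : Continuous (cdf μ)) : NullSingletonClass μ where
  measure_singleton x := by
    rw [← measure_cdf μ, StieltjesFunction.measure_singleton,
      h.continuousWithinAt.leftLim_eq, sub_self, ENNReal.ofReal_zero]

theorem measure_pi_setOf_eq_eq_zero {α : Type*} [MeasurableSpace α] [MeasurableEq α]
    {μ : Measure α} [SigmaFinite μ] [NullSingletonClass μ] {n : ℕ} {j k : Fin (n + 1)}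
    (hjk : j ≠ k) :
    Measure.pi (fun _ => μ) {x | x j = x k} = 0 := by
  obtain ⟨m, rfl⟩ := Fin.exists_succAbove_eq hjk
  have hdiag : MeasurableSet {p : α × (Fin n → α) | p.2 m = p.1} :=
    measurableSet_eq_fun (measurable_snd.eval) measurable_fst
  have hpre : {x : Fin (n + 1) → α | x (k.succAbove m) = x k} =
      MeasurableEquiv.piFinSuccAbove (fun _ => α) k ⁻¹' {p | p.2 m = p.1} := rfl
  rw [hpre, (measurePreserving_piFinSuccAbove (fun _ => μ) k).measure_preimage
    hdiag.nullMeasurableSet, Measure.measure_prod_null hdiag]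
  refine Filter.Eventually.of_forall fun a => ?_
  change Measure.pi _ ((fun y : Fin n → α => y m) ⁻¹' {a}) = 0
  exact Measure.pi_eval_preimage_null _ (measure_singleton a)

theorem ae_injective_pi {α : Type*} [MeasurableSpace α] [MeasurableEq α]
    {μ : Measure α} [SigmaFinite μ] [NullSingletonClass μ] {n : ℕ} :
    ∀ᵐ x ∂Measure.pi (fun _ : Fin (n + 1) => μ), Function.Injective x := by
  have hne (j k : Fin (n + 1)) : ∀ᵐ x ∂Measure.pi (fun _ => μ), x j = x k → j = k := by
    rcases eq_or_ne j k with rfl | hjk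
    · exact Filter.Eventually.of_forall fun _ _ => rfl
    · exact measure_mono_null (fun x hx => by simp_all) (measure_pi_setOf_eq_eq_zero hjk)
  filter_upwards [Filter.eventually_all.2 fun j => Filter.eventually_all.2 (hne j)] with x hx j k
  exact hx j k

noncomputable def maxAt {ι α : Type*} [LE α] [Zero α] (k : ι) : (ι → α) → α :=
  {x | ∀ j, x j ≤ x k}.indicator (fun x => x k)

theorem sum_maxAt_eq_iSup {ι α : Type*} [Fintype ι] [Nonempty ι]
    [ConditionallyCompleteLinearOrder α] [AddCommMonoid α] {x : ι → α}
    (hx : Function.Injective x) :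
    ∑ k, maxAt k x = ⨆ j, x j := by
  obtain ⟨k₀, hk₀⟩ := Finite.exists_max x
  rw [Finset.sum_eq_single_of_mem k₀ (Finset.mem_univ _), maxAt,
    indicator_of_mem (s := {y : ι → α | ∀ j, y j ≤ y k₀}) hk₀,
    ciSup_eq_of_forall_le_of_forall_lt_exists_gt hk₀ fun _ hw => ⟨k₀, hw⟩]
  intro k _ hk
  refine indicator_of_notMem (fun hmax => hk (hx ?_)) _
  exact le_antisymm (hk₀ k) (hmax k₀)

theorem measurableSet_setOf_forall_le {ι : Type*} [Countable ι] (k : ι) :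
    MeasurableSet {x : ι → ℝ | ∀ j, x j ≤ x k} := by
  simp only [ofPred_forall]
  exact .iInter fun j => measurableSet_le (measurable_pi_apply j) (measurable_pi_apply k)

section

variable {μ : Measure ℝ} [IsProbabilityMeasure μ]

theorem integral_indicator_forall_le_pi {ι : Type*} [Fintype ι] (a : ℝ) :
    ∫ y, {y : ι → ℝ | ∀ m, y m ≤ a}.indicator (fun _ => a) y ∂Measure.pi (fun _ => μ)
      = a * cdf μ a ^ Fintype.card ι := by
  have hbox : {y : ι → ℝ | ∀ m, y m ≤ a} = univ.pi fun _ => Iic a := by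
    ext; simp [Pi.le_def]
  rw [hbox, integral_indicator_const _ (.univ_pi fun _ => measurableSet_Iic), measureReal_def,
    Measure.pi_pi]
  simp [cdf_eq_real, measureReal_def, mul_comm]

theorem integral_maxAt_pi {n : ℕ} (hμ : Integrable id μ) (k : Fin (n + 1)) :
    ∫ x, maxAt k x ∂Measure.pi (fun _ => μ) = ∫ a, a * cdf μ a ^ n ∂μ := by
  set S : Set (ℝ × (Fin n → ℝ)) := {p | ∀ m, p.2 m ≤ p.1}
  have hS : MeasurableSet S := by
    simp only [S, ofPred_forall]
    exact .iInter fun m => measurableSet_le (measurable_snd.eval) measurable_fst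
  have hcomp (x : Fin (n + 1) → ℝ) :
      maxAt k x = S.indicator Prod.fst (MeasurableEquiv.piFinSuccAbove (fun _ => ℝ) k x) := by
    simp [maxAt, S, indicator, Fin.forall_iff_succAbove k,
      MeasurableEquiv.piFinSuccAbove_apply, Fin.removeNth]
  simp_rw [hcomp]
  rw [(measurePreserving_piFinSuccAbove (fun _ => μ) k).integral_comp',
    integral_prod (S.indicator Prod.fst) ((hμ.comp_fst _).indicator hS)]
  refine integral_congr_ae (.of_forall fun a => ?_)
  change ∫ y, {y : Fin n → ℝ | ∀ m, y m ≤ a}.indicator (fun _ => a) y ∂_ = _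
  simpa using integral_indicator_forall_le_pi (μ := μ) (ι := Fin n) a

theorem integral_iSup_pi_eq [NullSingletonClass μ] {n : ℕ} (hμ : Integrable id μ) :
    ∫ x, ⨆ j, x j ∂Measure.pi (fun _ : Fin (n + 1) => μ)
      = (n + 1) * ∫ a, a * cdf μ a ^ n ∂μ := by
  have hint (k : Fin (n + 1)) : Integrable (maxAt k) (Measure.pi fun _ => μ) :=
    (integrable_eval hμ).indicator (measurableSet_setOf_forall_le k)
  calc ∫ x, ⨆ j, x j ∂Measure.pi (fun _ => μ)
      = ∫ x, ∑ k, maxAt k x ∂Measure.pi fun _ => μ :=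
        integral_congr_ae (ae_injective_pi.mono fun x hx => (sum_maxAt_eq_iSup hx).symm)
    _ = ∑ k : Fin (n + 1), ∫ x, maxAt k x ∂Measure.pi fun _ => μ :=
        integral_finsetSum _ fun k _ => hint k
    _ = (n + 1) * ∫ a, a * cdf μ a ^ n ∂μ := by
      simp [integral_maxAt_pi hμ]

end

theorem pwm_eq_inv_mul_expectation_max_general
    {Ω : Type*} [MeasureSpace Ω] [IsProbabilityMeasure (ℙ : Measure Ω)]
    (i : ℕ) (hi : 1 ≤ i)
    (X : Fin i → Ω → ℝ) (X0 : Ω → ℝ)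
    (hindep : iIndepFun X ℙ)
    (hident : ∀ j, IdentDistrib (X j) X0 ℙ ℙ)
    (F : ℝ → ℝ)
    (hF : ∀ x, F x = (ℙ {ω | X0 ω ≤ x}).toReal)
    (hFcont : Continuous F)
    (hint : Integrable X0 ℙ) :
    ∫ ω, X0 ω * (F (X0 ω)) ^ (i - 1) ∂ℙ
      = (1 / (i : ℝ)) * ∫ ω, ⨆ j, X j ω ∂ℙ := by
  obtain ⟨n, rfl⟩ : ∃ n, i = n + 1 := ⟨i - 1, by omega⟩
  have hX0 : AEMeasurable X0 ℙ := (hident 0).aemeasurable_snd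
  set μ : Measure ℝ := Measure.map X0 ℙ
  have : IsProbabilityMeasure μ := Measure.isProbabilityMeasure_map hX0
  have hF_eq : F = cdf μ := funext fun x => by
    rw [hF, cdf_eq_real, measureReal_def, Measure.map_apply_of_aemeasurable hX0 measurableSet_Iic]
    rfl
  have : NullSingletonClass μ := nullSingletonClass_of_continuous_cdf (hF_eq ▸ hFcont)
  have hlaw : Measure.map (fun ω j => X j ω) ℙ = Measure.pi fun _ => μ := by
    rw [hindep.map_fun_eq_pi_map fun j => (hident j).aemeasurable_fst]
    exact congrArg Measure.pi (funext fun j => (hident j).map_eq)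
  have hμ : Integrable id μ :=
    (integrable_map_measure aestronglyMeasurable_id hX0).mpr hint
  calc ∫ ω, X0 ω * F (X0 ω) ^ (n + 1 - 1) ∂ℙ = ∫ a, a * cdf μ a ^ n ∂μ := by
        rw [Nat.add_sub_cancel, ← hF_eq]
        have hcont : Continuous fun a => a * F a ^ n := by fun_prop
        exact (integral_map hX0 hcont.aestronglyMeasurable).symm
    _ = 1 / (n + 1 : ℝ) * ∫ x, ⨆ j, x j ∂Measure.pi (fun _ : Fin (n + 1) => μ) := by
        rw [integral_iSup_pi_eq hμ]
        field_simp
    _ = _ := by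
        rw [← hlaw, integral_map (aemeasurable_pi_lambda _ fun j => (hident j).aemeasurable_fst)
          (by fun_prop)]
        push_cast
        rfl

/-- For a real random variable `X0` with continuous c.d.f. `F` and finite expectation,
and i.i.d. copies `X 0, ..., X (i-1)` of `X0`, the probability weighted moment
`β_i = E[X · F(X)^(i-1)]` satisfies `β_i = (1/i) · E[max(X_1,...,X_i)]`. -/
theorem pwm_eq_inv_mul_expectation_max
    {Ω : Type*} [MeasureSpace Ω] [IsProbabilityMeasure (ℙ : Measure Ω)]
    (i : ℕ) (hi : 1 ≤ i)
    (X : Fin i → Ω → ℝ) (X0 : Ω → ℝ)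
    (hX0meas : Measurable X0)
    (hXmeas : ∀ j, Measurable (X j))
    (hindep : iIndepFun X ℙ)
    (hident : ∀ j, IdentDistrib (X j) X0 ℙ ℙ)
    (F : ℝ → ℝ)
    (hF : ∀ x, F x = (ℙ {ω | X0 ω ≤ x}).toReal)
    (hFcont : Continuous F)
    (hint : Integrable X0 ℙ) :
    ∫ ω, X0 ω * (F (X0 ω)) ^ (i - 1) ∂ℙ
      = (1 / (i : ℝ)) * ∫ ω, ⨆ j, X j ω ∂ℙ :=
  pwm_eq_inv_mul_expectation_max_general i hi X X0 hindep hident F hF hFcont hint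
end

section
/- If X_1, X_2, X_3 are i.i.d. real-valued random variables with continuous c.d.f. F and finite expectation, then E[3·max(X_1,X_2,X_3)] > E[max(X_1,X_2)] + E[max(X_1,X_3)] + E[max(X_2,X_3)]; equivalently, with β_2 = E[X_1·F(X_1)] and β_3 = E[X_1·F(X_1)^2], one has 3β_3 − 2β_2 > 0. -/
/-!
For reals `a, b, c`, `3 * max a (max b c) - (max a b + max a c + max b c)` is the gap between the
largest and the second largest of the three, so it is positive as soon as they are pairwise
distinct. A continuous c.d.f. has no atoms, hence independent copies tie with probability zero
and the gap has positive expectation.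

For the second inequality, split `max a b` and `max a (max b c)` according to which coordinate
is the largest, breaking ties by position. Since `P(X < x) = P(X ≤ x) = F x` in the absence of
atoms, Fubini turns each piece into `β₂ = E[X F(X)]`, resp. `β₃ = E[X F(X)²]`, so that
`E[max(X₁,X₂)] = 2β₂` and `E[max(X₁,X₂,X₃)] = 3β₃`, and the first inequality reads `9β₃ > 6β₂`.
-/

open MeasureTheory ProbabilityTheory Set

lemma max_eq_indicator_add_indicator (a b : ℝ) :
    max a b = {p : ℝ × ℝ | p.2 ≤ p.1}.indicator Prod.fst (a, b)
      + {p : ℝ × ℝ | p.2 < p.1}.indicator Prod.fst (b, a) := by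
  rcases le_or_gt b a with h | h
  · simp [h, h.not_gt]
  · simp [h, h.not_ge, h.le]

lemma max_max_eq_indicator_add_indicator_add_indicator (a b c : ℝ) :
    max a (max b c) = {p : ℝ × ℝ × ℝ | p.2.1 ≤ p.1 ∧ p.2.2 ≤ p.1}.indicator Prod.fst (a, b, c)
      + {p : ℝ × ℝ × ℝ | p.2.1 < p.1 ∧ p.2.2 ≤ p.1}.indicator Prod.fst (b, a, c)
      + {p : ℝ × ℝ × ℝ | p.2.1 < p.1 ∧ p.2.2 < p.1}.indicator Prod.fst (c, a, b) := by
  simp only [indicator_apply, mem_ofPred_eq, max_def]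
  split_ifs <;> grind

lemma sum_max_lt_three_mul_max {a b c : ℝ} (hab : a ≠ b) (hac : a ≠ c) (hbc : b ≠ c) :
    max a b + max a c + max b c < 3 * max a (max b c) := by
  rcases hab.lt_or_gt with h₁ | h₁ <;> rcases hac.lt_or_gt with h₂ | h₂ <;>
    rcases hbc.lt_or_gt with h₃ | h₃ <;> simp only [max_def] <;> split_ifs <;> linarith

lemma integral_sum_max_lt_integral_three_mul_max {Ω : Type*} [MeasurableSpace Ω] {P : Measure Ω}
    [NeZero P] {Y Z W : Ω → ℝ} (hY : Integrable Y P) (hZ : Integrable Z P) (hW : Integrable W P)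
    (hYZ : ∀ᵐ ω ∂P, Y ω ≠ Z ω) (hYW : ∀ᵐ ω ∂P, Y ω ≠ W ω) (hZW : ∀ᵐ ω ∂P, Z ω ≠ W ω) :
    ∫ ω, max (Y ω) (Z ω) ∂P + ∫ ω, max (Y ω) (W ω) ∂P + ∫ ω, max (Z ω) (W ω) ∂P
      < ∫ ω, 3 * max (Y ω) (max (Z ω) (W ω)) ∂P := by
  set gap := fun ω => 3 * max (Y ω) (max (Z ω) (W ω))
    - (max (Y ω) (Z ω) + max (Y ω) (W ω) + max (Z ω) (W ω))
  have hYZ' : Integrable (fun ω => max (Y ω) (Z ω)) P := hY.sup hZ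
  have hYW' : Integrable (fun ω => max (Y ω) (W ω)) P := hY.sup hW
  have hZW' : Integrable (fun ω => max (Z ω) (W ω)) P := hZ.sup hW
  have hmax : Integrable (fun ω => 3 * max (Y ω) (max (Z ω) (W ω))) P :=
    (hY.sup (hZ.sup hW)).const_mul 3
  have hgap_pos : ∀ᵐ ω ∂P, 0 < gap ω := by
    filter_upwards [hYZ, hYW, hZW] with ω h₁ h₂ h₃
    exact sub_pos.2 (sum_max_lt_three_mul_max h₁ h₂ h₃)
  have hgap_int : Integrable gap P := hmax.sub ((hYZ'.add hYW').add hZW')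
  have hint_pos : 0 < ∫ ω, gap ω ∂P := by
    rw [integral_pos_iff_support_of_nonneg_ae (hgap_pos.mono fun _ h => h.le) hgap_int,
      pos_iff_ne_zero]
    exact frequently_ae_iff.1 (hgap_pos.mono fun _ h => h.ne').frequently
  rw [integral_sub hmax (by exact (hYZ'.add hYW').add hZW'),
    integral_add (by exact hYZ'.add hYW') hZW', integral_add hYZ' hYW'] at hint_pos
  linarith

namespace MeasureTheory.Measure

lemma prod_diagonal_eq_zero {α : Type*} [MeasurableSpace α] [MeasurableEq α]
    (μ ν : Measure α) [SFinite ν] [NullSingletonClass ν] : (μ.prod ν) (diagonal α) = 0 := by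
  rw [prod_apply measurableSet_diagonal]
  simp [diagonal]

end MeasureTheory.Measure

section Prod
variable {α β : Type*} [MeasurableSpace α] [MeasurableSpace β] {μ : Measure α} {ν : Measure β}
  [IsFiniteMeasure ν] {f : α → ℝ} {s : Set (α × β)}

lemma integral_prod_indicator_comp_fst [SFinite μ] (hf : Integrable f μ) (hs : MeasurableSet s) :
    ∫ p, s.indicator (fun p => f p.1) p ∂(μ.prod ν) = ∫ x, ν.real (Prod.mk x ⁻¹' s) * f x ∂μ := by
  rw [integral_prod _ ((hf.comp_fst ν).indicator hs)]
  congr 1 with x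
  have hx : (fun y => s.indicator (fun p => f p.1) (x, y))
      = (Prod.mk x ⁻¹' s).indicator (fun _ => f x) :=
    rfl
  rw [hx, integral_indicator_const _ (measurable_prodMk_left hs), smul_eq_mul]

variable {Ω : Type*} [MeasurableSpace Ω] {P : Measure Ω} {V : Ω → α × β}

lemma integrable_indicator_comp_of_map_eq_prod (hV : Measurable V) (hlaw : P.map V = μ.prod ν)
    (hf : Integrable f μ) (hs : MeasurableSet s) :
    Integrable (fun ω => s.indicator (fun p => f p.1) (V ω)) P := by
  have h := (hf.comp_fst ν).indicator hs
  rw [← hlaw] at h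
  exact h.comp_measurable hV

lemma integral_indicator_comp_of_map_eq_prod [SFinite μ] (hV : Measurable V)
    (hlaw : P.map V = μ.prod ν) (hf : Integrable f μ) (hs : MeasurableSet s) :
    ∫ ω, s.indicator (fun p => f p.1) (V ω) ∂P = ∫ x, ν.real (Prod.mk x ⁻¹' s) * f x ∂μ := by
  have h := (hf.comp_fst ν).indicator hs
  rw [← integral_prod_indicator_comp_fst hf hs, ← hlaw] at *
  exact (integral_map hV.aemeasurable h.1).symm

end Prod

namespace ProbabilityTheory

lemma nullSingletonClass_of_continuous_cdf (μ : Measure ℝ) [IsProbabilityMeasure μ]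
    (h : Continuous (cdf μ)) : NullSingletonClass μ where
  measure_singleton x := by
    rw [← measure_cdf μ, StieltjesFunction.measure_singleton,
      h.continuousWithinAt.leftLim_eq, sub_self, ENNReal.ofReal_zero]

lemma measureReal_Iio_eq_cdf (μ : Measure ℝ) [IsProbabilityMeasure μ] [NullSingletonClass μ]
    (x : ℝ) : μ.real (Iio x) = cdf μ x :=
  (measureReal_congr Iio_ae_eq_Iic).trans (cdf_eq_real μ x).symm

end ProbabilityTheory

namespace ProbabilityTheory.iIndepFun

section Law
variable {Ω ι α : Type*} [MeasurableSpace Ω] [MeasurableSpace α] {P : Measure Ω}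
  [IsProbabilityMeasure P] {X : ι → Ω → α} {μ : Measure α}

lemma map_prodMk_eq_prod (hX : ∀ i, Measurable (X i)) (hind : iIndepFun X P)
    (hlaw : ∀ i, P.map (X i) = μ) {i j : ι} (hij : i ≠ j) :
    P.map (fun ω => (X i ω, X j ω)) = μ.prod μ := by
  rw [(indepFun_iff_map_prod_eq_prod_map_map (hX i).aemeasurable (hX j).aemeasurable).1
    (hind.indepFun hij), hlaw, hlaw]

lemma map_prodMk_prodMk_eq_prod (hX : ∀ i, Measurable (X i)) (hind : iIndepFun X P)
    (hlaw : ∀ i, P.map (X i) = μ) {i j k : ι} (hij : i ≠ j) (hik : i ≠ k) (hjk : j ≠ k) :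
    P.map (fun ω => (X i ω, X j ω, X k ω)) = μ.prod (μ.prod μ) := by
  have h := (hind.indepFun_prodMk hX j k i hij.symm hik.symm).symm
  rw [(indepFun_iff_map_prod_eq_prod_map_map (hX i).aemeasurable
    ((hX j).prodMk (hX k)).aemeasurable).1 h, hlaw, map_prodMk_eq_prod hX hind hlaw hjk]

lemma ae_ne [MeasurableEq α] [SFinite μ] [NullSingletonClass μ] (hX : ∀ i, Measurable (X i))
    (hind : iIndepFun X P) (hlaw : ∀ i, P.map (X i) = μ) {i j : ι} (hij : i ≠ j) :
    ∀ᵐ ω ∂P, X i ω ≠ X j ω := by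
  have hV := (hX i).prodMk (hX j)
  simp only [ae_iff, not_not]
  rw [show {ω | X i ω = X j ω} = (fun ω => (X i ω, X j ω)) ⁻¹' diagonal α from rfl,
    ← Measure.map_apply hV measurableSet_diagonal, map_prodMk_eq_prod hX hind hlaw hij]
  exact Measure.prod_diagonal_eq_zero μ μ

end Law

variable {Ω ι : Type*} [MeasurableSpace Ω] {P : Measure Ω} [IsProbabilityMeasure P]
  {X : ι → Ω → ℝ} {μ : Measure ℝ} [IsProbabilityMeasure μ] [NullSingletonClass μ]

lemma integral_max (hX : ∀ i, Measurable (X i)) (hind : iIndepFun X P)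
    (hlaw : ∀ i, P.map (X i) = μ) (hμ : Integrable (fun x => x) μ) {i j : ι} (hij : i ≠ j) :
    ∫ ω, max (X i ω) (X j ω) ∂P = 2 * ∫ x, x * cdf μ x ∂μ := by
  have hs₁ : MeasurableSet {p : ℝ × ℝ | p.2 ≤ p.1} := measurableSet_le measurable_snd measurable_fst
  have hs₂ : MeasurableSet {p : ℝ × ℝ | p.2 < p.1} := measurableSet_lt measurable_snd measurable_fst
  have hV₁ := (hX i).prodMk (hX j)
  have hV₂ := (hX j).prodMk (hX i)
  have hlaw₁ := map_prodMk_eq_prod hX hind hlaw hij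
  have hlaw₂ := map_prodMk_eq_prod hX hind hlaw hij.symm
  simp_rw [max_eq_indicator_add_indicator]
  rw [integral_add (integrable_indicator_comp_of_map_eq_prod hV₁ hlaw₁ hμ hs₁)
      (integrable_indicator_comp_of_map_eq_prod hV₂ hlaw₂ hμ hs₂),
    integral_indicator_comp_of_map_eq_prod hV₁ hlaw₁ hμ hs₁,
    integral_indicator_comp_of_map_eq_prod hV₂ hlaw₂ hμ hs₂]
  have h₁ (x : ℝ) : μ.real (Prod.mk x ⁻¹' {p : ℝ × ℝ | p.2 ≤ p.1}) = cdf μ x :=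
    (cdf_eq_real μ x).symm
  have h₂ (x : ℝ) : μ.real (Prod.mk x ⁻¹' {p : ℝ × ℝ | p.2 < p.1}) = cdf μ x :=
    measureReal_Iio_eq_cdf μ x
  simp_rw [h₁, h₂, mul_comm (cdf μ _)]
  ring

lemma integral_max_max (hX : ∀ i, Measurable (X i)) (hind : iIndepFun X P)
    (hlaw : ∀ i, P.map (X i) = μ) (hμ : Integrable (fun x => x) μ) {i j k : ι} (hij : i ≠ j)
    (hik : i ≠ k) (hjk : j ≠ k) :
    ∫ ω, max (X i ω) (max (X j ω) (X k ω)) ∂P = 3 * ∫ x, x * cdf μ x ^ 2 ∂μ := by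
  have hs₁ : MeasurableSet {p : ℝ × ℝ × ℝ | p.2.1 ≤ p.1 ∧ p.2.2 ≤ p.1} :=
    (measurableSet_le measurable_snd.fst measurable_fst).inter
      (measurableSet_le measurable_snd.snd measurable_fst)
  have hs₂ : MeasurableSet {p : ℝ × ℝ × ℝ | p.2.1 < p.1 ∧ p.2.2 ≤ p.1} :=
    (measurableSet_lt measurable_snd.fst measurable_fst).inter
      (measurableSet_le measurable_snd.snd measurable_fst)
  have hs₃ : MeasurableSet {p : ℝ × ℝ × ℝ | p.2.1 < p.1 ∧ p.2.2 < p.1} :=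
    (measurableSet_lt measurable_snd.fst measurable_fst).inter
      (measurableSet_lt measurable_snd.snd measurable_fst)
  have hV₁ := (hX i).prodMk ((hX j).prodMk (hX k))
  have hV₂ := (hX j).prodMk ((hX i).prodMk (hX k))
  have hV₃ := (hX k).prodMk ((hX i).prodMk (hX j))
  have hlaw₁ := map_prodMk_prodMk_eq_prod hX hind hlaw hij hik hjk
  have hlaw₂ := map_prodMk_prodMk_eq_prod hX hind hlaw hij.symm hjk hik
  have hlaw₃ := map_prodMk_prodMk_eq_prod hX hind hlaw hik.symm hjk.symm hij
  have hi₁ := integrable_indicator_comp_of_map_eq_prod hV₁ hlaw₁ hμ hs₁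
  have hi₂ := integrable_indicator_comp_of_map_eq_prod hV₂ hlaw₂ hμ hs₂
  have hi₃ := integrable_indicator_comp_of_map_eq_prod hV₃ hlaw₃ hμ hs₃
  simp_rw [max_max_eq_indicator_add_indicator_add_indicator]
  rw [integral_add (by exact hi₁.add hi₂) hi₃, integral_add hi₁ hi₂,
    integral_indicator_comp_of_map_eq_prod hV₁ hlaw₁ hμ hs₁,
    integral_indicator_comp_of_map_eq_prod hV₂ hlaw₂ hμ hs₂,
    integral_indicator_comp_of_map_eq_prod hV₃ hlaw₃ hμ hs₃]
  have h₁ (x : ℝ) : (μ.prod μ).real (Prod.mk x ⁻¹' {p : ℝ × ℝ × ℝ | p.2.1 ≤ p.1 ∧ p.2.2 ≤ p.1})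
      = cdf μ x ^ 2 := by
    rw [show Prod.mk x ⁻¹' _ = Iic x ×ˢ Iic x from rfl, measureReal_prod_prod, cdf_eq_real, sq]
  have h₂ (x : ℝ) : (μ.prod μ).real (Prod.mk x ⁻¹' {p : ℝ × ℝ × ℝ | p.2.1 < p.1 ∧ p.2.2 ≤ p.1})
      = cdf μ x ^ 2 := by
    rw [show Prod.mk x ⁻¹' _ = Iio x ×ˢ Iic x from rfl, measureReal_prod_prod,
      measureReal_Iio_eq_cdf, cdf_eq_real, sq]
  have h₃ (x : ℝ) : (μ.prod μ).real (Prod.mk x ⁻¹' {p : ℝ × ℝ × ℝ | p.2.1 < p.1 ∧ p.2.2 < p.1})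
      = cdf μ x ^ 2 := by
    rw [show Prod.mk x ⁻¹' _ = Iio x ×ˢ Iio x from rfl, measureReal_prod_prod,
      measureReal_Iio_eq_cdf, sq]
  simp_rw [h₁, h₂, h₃, mul_comm (cdf μ _ ^ 2)]
  ring

end ProbabilityTheory.iIndepFun

/-- If `X 0, X 1, X 2` are i.i.d. real random variables with continuous c.d.f. `F` and finite
expectation, then `E[3·max(X₁,X₂,X₃)] > E[max(X₁,X₂)] + E[max(X₁,X₃)] + E[max(X₂,X₃)]`;
equivalently, with `β₂ = E[X₁·F(X₁)]` and `β₃ = E[X₁·F(X₁)²]`, one has `3β₃ − 2β₂ > 0`. -/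
theorem expectation_three_mul_max_gt
    {Ω : Type*} [MeasureSpace Ω] [IsProbabilityMeasure (ℙ : Measure Ω)]
    (X : Fin 3 → Ω → ℝ)
    (hXmeas : ∀ j, Measurable (X j))
    (hindep : iIndepFun X ℙ)
    (hident : ∀ j, IdentDistrib (X j) (X 0) ℙ ℙ)
    (F : ℝ → ℝ)
    (hF : ∀ x, F x = (ℙ {ω | X 0 ω ≤ x}).toReal)
    (hFcont : Continuous F)
    (hint : Integrable (X 0) ℙ) :
    (∫ ω, 3 * max (X 0 ω) (max (X 1 ω) (X 2 ω)) ∂ℙ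
        > (∫ ω, max (X 0 ω) (X 1 ω) ∂ℙ) + (∫ ω, max (X 0 ω) (X 2 ω) ∂ℙ)
          + (∫ ω, max (X 1 ω) (X 2 ω) ∂ℙ)) ∧
      3 * (∫ ω, X 0 ω * (F (X 0 ω)) ^ 2 ∂ℙ) - 2 * (∫ ω, X 0 ω * F (X 0 ω) ∂ℙ) > 0 := by
  set μ := (ℙ : Measure Ω).map (X 0)
  have hlaw (j : Fin 3) : (ℙ : Measure Ω).map (X j) = μ := (hident j).map_eq
  have : IsProbabilityMeasure μ := Measure.isProbabilityMeasure_map (hXmeas 0).aemeasurable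
  have hβ (n : ℕ) : ∫ ω, X 0 ω * F (X 0 ω) ^ n ∂ℙ = ∫ x, x * F x ^ n ∂μ :=
    (integral_map (hXmeas 0).aemeasurable
      (by fun_prop : Continuous fun x => x * F x ^ n).aestronglyMeasurable).symm
  have hF_cdf : F = cdf μ := funext fun x => by
    rw [hF, cdf_eq_real, measureReal_def, Measure.map_apply (hXmeas 0) measurableSet_Iic]
    rfl
  subst hF_cdf
  have : NullSingletonClass μ := nullSingletonClass_of_continuous_cdf μ hFcont
  have hμ : Integrable (fun x => x) μ :=
    (integrable_map_measure aestronglyMeasurable_id (hXmeas 0).aemeasurable).2 hint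
  have hXint (j : Fin 3) : Integrable (X j) ℙ := (hident j).integrable_iff.2 hint
  have hgap := integral_sum_max_lt_integral_three_mul_max (hXint 0) (hXint 1) (hXint 2)
    (hindep.ae_ne hXmeas hlaw (by decide)) (hindep.ae_ne hXmeas hlaw (by decide))
    (hindep.ae_ne hXmeas hlaw (by decide))
  refine ⟨hgap, ?_⟩
  rw [integral_const_mul, hindep.integral_max_max hXmeas hlaw hμ (by decide) (by decide)
      (by decide), hindep.integral_max hXmeas hlaw hμ (by decide),
    hindep.integral_max hXmeas hlaw hμ (by decide),
    hindep.integral_max hXmeas hlaw hμ (by decide)] at hgap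
  have hβ₂ : ∫ ω, X 0 ω * cdf μ (X 0 ω) ∂ℙ = ∫ x, x * cdf μ x ∂μ := by
    simpa only [pow_one] using hβ 1
  rw [hβ 2, hβ₂]
  linarith
end

section
/- Let X be a random variable with continuous c.d.f. F and finite expectation, and define the probability weighted moments β_i = E[X·F(X)^{i-1}] for i = 1,2,3 (assumed finite). Then −β_1 + 4β_2 − 3β_3 > 0. -/
open MeasureTheory ProbabilityTheory Set Filter Topology

section Unif
variable {μ : Measure ℝ} [IsProbabilityMeasure μ] {F : ℝ → ℝ}

lemma F_eq_cdf (hF : ∀ x, F x = (μ (Iic x)).toReal) : F = cdf μ := by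
  funext x; rw [hF, cdf_eq_real, measureReal_def]

-- existence of a point with F x = u for u ∈ (0,1)
lemma exists_F_eq (hF : ∀ x, F x = (μ (Iic x)).toReal) (hFc : Continuous F)
    {u : ℝ} (h0 : 0 < u) (h1 : u < 1) : ∃ x, F x = u := by
  have hcdf := F_eq_cdf hF
  have hbot : Tendsto F atBot (𝓝 0) := hcdf ▸ tendsto_cdf_atBot μ
  have htop : Tendsto F atTop (𝓝 1) := hcdf ▸ tendsto_cdf_atTop μ
  obtain ⟨a, ha⟩ := (hbot.eventually (eventually_lt_nhds h0)).exists
  obtain ⟨b, hb⟩ := (htop.eventually (eventually_gt_nhds h1)).exists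
  have hab : a ≤ b := by
    by_contra hh
    push_neg at hh
    have := (hcdf ▸ monotone_cdf μ) hh.le
    linarith
  have : u ∈ Icc (F a) (F b) := ⟨ha.le, hb.le⟩
  obtain ⟨x, _, hx⟩ := intermediate_value_Icc hab hFc.continuousOn this
  exact ⟨x, hx⟩

end Unif

section Unif2
variable {μ : Measure ℝ} [IsProbabilityMeasure μ] {F : ℝ → ℝ}

lemma map_cdf_uniform (hF : ∀ x, F x = (μ (Iic x)).toReal) (hFc : Continuous F) :
    μ.map F = volume.restrict (Icc (0:ℝ) 1) := by
  have hcdf := F_eq_cdf hF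
  have hmono : Monotone F := hcdf ▸ monotone_cdf μ
  have h0 : ∀ x, 0 ≤ F x := fun x => hcdf ▸ cdf_nonneg μ x
  have h1 : ∀ x, F x ≤ 1 := fun x => hcdf ▸ cdf_le_one μ x
  have hmeas : Measurable F := hFc.measurable
  -- upper bound for μ {x | F x ≤ u}, 0 ≤ u < 1
  have hub : ∀ u : ℝ, 0 ≤ u → u < 1 → μ {x | F x ≤ u} ≤ ENNReal.ofReal u := by
    intro u hu0 hu1
    refine ENNReal.le_of_forall_pos_le_add (fun ε hε _ => ?_)
    set u' : ℝ := min (u + ε) ((u + 1) / 2) with hu'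
    have hu'u : u < u' := lt_min (lt_add_of_pos_right u (by exact_mod_cast hε)) (by linarith)
    have hu'1 : u' < 1 := lt_of_le_of_lt (min_le_right _ _) (by linarith)
    obtain ⟨z, hz⟩ := exists_F_eq hF hFc (lt_of_le_of_lt hu0 hu'u) hu'1
    have hsub : {x | F x ≤ u} ⊆ Iic z := by
      intro x hx
      by_contra hxz
      simp only [mem_Iic, not_le] at hxz
      have := hmono hxz.le
      rw [hz] at this
      exact absurd (le_trans this hx) (not_le.mpr hu'u)
    calc μ {x | F x ≤ u} ≤ μ (Iic z) := measure_mono hsub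
      _ = ENNReal.ofReal (F z) := by
          rw [hF z, ENNReal.ofReal_toReal (measure_ne_top μ _)]
      _ ≤ ENNReal.ofReal (u + ε) := by
          rw [hz]; exact ENNReal.ofReal_le_ofReal (min_le_left _ _)
      _ = ENNReal.ofReal u + ε := by
          rw [ENNReal.ofReal_add hu0 ε.coe_nonneg, ENNReal.ofReal_coe_nnreal]
  -- lower bound for 0 < u < 1
  have hlb : ∀ u : ℝ, 0 < u → u < 1 → ENNReal.ofReal u ≤ μ {x | F x ≤ u} := by
    intro u hu0 hu1
    obtain ⟨z, hz⟩ := exists_F_eq hF hFc hu0 hu1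
    have hsub : Iic z ⊆ {x | F x ≤ u} := fun x hx => by
      simpa [hz] using hmono (mem_Iic.mp hx)
    calc ENNReal.ofReal u = μ (Iic z) := by
          rw [hF z] at hz; rw [← hz, ENNReal.ofReal_toReal (measure_ne_top μ _)]
      _ ≤ μ {x | F x ≤ u} := measure_mono hsub
  refine Measure.ext_of_Iic _ _ (fun u => ?_)
  rw [Measure.map_apply hmeas measurableSet_Iic, Measure.restrict_apply measurableSet_Iic]
  have hpre : F ⁻¹' Iic u = {x | F x ≤ u} := rfl
  rcases lt_or_ge u 0 with hu | hu
  · have : Iic u ∩ Icc (0:ℝ) 1 = ∅ := by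
      ext x; simp only [mem_inter_iff, mem_Iic, mem_Icc, mem_empty_iff_false, iff_false]
      rintro ⟨hxu, hx0, -⟩; linarith
    rw [hpre, this, measure_empty]
    have : {x | F x ≤ u} = ∅ := by
      ext x; simp only [mem_setOf_eq, mem_empty_iff_false, iff_false, not_le]
      exact lt_of_lt_of_le hu (h0 x)
    rw [this, measure_empty]
  rcases le_or_gt 1 u with hu1 | hu1
  · have h2 : Iic u ∩ Icc (0:ℝ) 1 = Icc 0 1 := by
      ext x; simp only [mem_inter_iff, mem_Iic, mem_Icc]
      exact ⟨fun h => h.2, fun h => ⟨le_trans h.2 hu1, h⟩⟩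
    have h3 : {x | F x ≤ u} = univ := by
      ext x; simp only [mem_setOf_eq, mem_univ, iff_true]
      exact le_trans (h1 x) hu1
    rw [hpre, h2, h3, measure_univ, Real.volume_Icc]
    norm_num
  · have h2 : Iic u ∩ Icc (0:ℝ) 1 = Icc 0 u := by
      ext x; simp only [mem_inter_iff, mem_Iic, mem_Icc]
      constructor
      · rintro ⟨hxu, hx0, -⟩; exact ⟨hx0, hxu⟩
      · rintro ⟨hx0, hxu⟩; exact ⟨hxu, hx0, by linarith⟩
    rw [hpre, h2, Real.volume_Icc]
    rcases eq_or_lt_of_le hu with hu0 | hu0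
    · -- u = 0 case : μ {F ≤ 0} = 0
      refine le_antisymm ?_ ?_
      · -- μ {F ≤ 0} ≤ ofReal 0 = 0 : use hub at small u' — but hub needs u ≥ 0; hub 0
        have := hub 0 le_rfl one_pos
        simpa [← hu0] using this
      · simp [← hu0]
    · exact le_antisymm
        (le_trans (hub u hu hu1) (by simp))
        (le_trans (by simp) (hlb u hu0 hu1))

end Unif2


noncomputable def gg : ℝ → ℝ := fun u => -1 + 4*u - 3*u^2

lemma gg_cont : Continuous gg := by unfold gg; continuity

lemma gg_intervalIntegral (v : ℝ) : ∫ u in v..1, gg u = v * (1 - v)^2 := by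
  unfold gg
  rw [intervalIntegral.integral_sub, intervalIntegral.integral_add]
  · rw [intervalIntegral.integral_const]
    rw [intervalIntegral.integral_const_mul, integral_id]
    rw [intervalIntegral.integral_const_mul, integral_pow]
    simp [smul_eq_mul]; ring
  · exact intervalIntegrable_const
  · exact (intervalIntegral.intervalIntegrable_id).const_mul 4
  · exact (intervalIntegrable_const).add
      ((intervalIntegral.intervalIntegrable_id).const_mul 4)
  · exact (intervalIntegral.intervalIntegrable_pow 2).const_mul 3

lemma gg_unif_tail {v : ℝ} (h0 : 0 ≤ v) (h1 : v ≤ 1) :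
    ∫ y in Ioi v, gg y ∂(volume.restrict (Icc (0:ℝ) 1)) = v * (1 - v)^2 := by
  rw [Measure.restrict_restrict measurableSet_Ioi]
  have : Ioi v ∩ Icc (0:ℝ) 1 = Ioc v 1 := by
    ext x; simp only [mem_inter_iff, mem_Ioi, mem_Icc, mem_Ioc]
    exact ⟨fun h => ⟨h.1, h.2.2⟩, fun h => ⟨h.1, le_trans h0 h.1.le, h.2⟩⟩
  rw [this, ← intervalIntegral.integral_of_le h1, gg_intervalIntegral]

lemma gg_unif_total : ∫ y, gg y ∂(volume.restrict (Icc (0:ℝ) 1)) = 0 := by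
  have h1 : Icc (0:ℝ) 1 =ᵐ[volume] Ioc (0:ℝ) 1 := (Ioc_ae_eq_Icc (μ := volume)).symm
  rw [← setIntegral_univ]
  show ∫ y in univ, gg y ∂(volume.restrict (Icc (0:ℝ) 1)) = 0
  rw [Measure.restrict_restrict MeasurableSet.univ, univ_inter,
    Measure.restrict_congr_set h1, ← intervalIntegral.integral_of_le zero_le_one,
    gg_intervalIntegral]
  ring

section Omega
variable {Ω : Type*} [MeasureSpace Ω] [IsProbabilityMeasure (ℙ : Measure Ω)]
  {X : Ω → ℝ} {F : ℝ → ℝ}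

lemma tail_integral (hXmeas : Measurable X) (hFc : Continuous F) (hmono : Monotone F)
    (h0 : ∀ x, 0 ≤ F x) (h1 : ∀ x, F x ≤ 1)
    (hmapY : Measure.map (fun ω => F (X ω)) ℙ = volume.restrict (Icc (0:ℝ) 1)) (t : ℝ) :
    ∫ ω in {ω | t < X ω}, gg (F (X ω)) ∂ℙ = F t * (1 - F t)^2 := by
  have hYmeas : Measurable (fun ω => F (X ω)) := hFc.measurable.comp hXmeas
  have hnull : ℙ {ω | F (X ω) = F t} = 0 := by
    have : {ω | F (X ω) = F t} = (fun ω => F (X ω)) ⁻¹' {F t} := rfl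
    rw [this, ← Measure.map_apply hYmeas (measurableSet_singleton _), hmapY,
      Measure.restrict_apply (measurableSet_singleton _)]
    exact measure_mono_null inter_subset_left (Real.volume_singleton)
  have hsetae : {ω | t < X ω} =ᵐ[ℙ] (fun ω => F (X ω)) ⁻¹' (Ioi (F t)) := by
    rw [ae_eq_set]
    constructor
    · refine measure_mono_null (fun ω hω => ?_) hnull
      obtain ⟨h1', h2'⟩ := hω
      simp only [mem_preimage, mem_Ioi, not_lt] at h2'
      exact le_antisymm h2' (hmono (le_of_lt h1'))
    · refine measure_mono_null (fun ω hω => ?_) (measure_empty)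
      obtain ⟨h1', h2'⟩ := hω
      simp only [mem_preimage, mem_Ioi] at h1'
      simp only [mem_setOf_eq, not_lt] at h2'
      exact absurd (hmono h2') (not_le.mpr h1')
  rw [setIntegral_congr_set hsetae,
    ← setIntegral_map measurableSet_Ioi gg_cont.aestronglyMeasurable hYmeas.aemeasurable,
    hmapY]
  exact gg_unif_tail (h0 t) (h1 t)

lemma gg_integrable (hXmeas : Measurable X) (hFc : Continuous F)
    (h0 : ∀ x, 0 ≤ F x) (h1 : ∀ x, F x ≤ 1) :
    Integrable (fun ω => gg (F (X ω))) ℙ := by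
  have hYmeas : Measurable (fun ω => F (X ω)) := hFc.measurable.comp hXmeas
  refine ⟨(gg_cont.measurable.comp hYmeas).aestronglyMeasurable, ?_⟩
  refine HasFiniteIntegral.of_bounded (C := 8) (Eventually.of_forall fun ω => ?_)
  have a0 := h0 (X ω); have a1 := h1 (X ω)
  rw [Real.norm_eq_abs]
  unfold gg
  rw [abs_le]
  constructor <;> nlinarith

lemma total_integral (hXmeas : Measurable X) (hFc : Continuous F)
    (hmapY : Measure.map (fun ω => F (X ω)) ℙ = volume.restrict (Icc (0:ℝ) 1)) :
    ∫ ω, gg (F (X ω)) ∂ℙ = 0 := by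
  have hYmeas : Measurable (fun ω => F (X ω)) := hFc.measurable.comp hXmeas
  rw [← integral_map hYmeas.aemeasurable gg_cont.aestronglyMeasurable, hmapY, gg_unif_total]

lemma iic_integral (hXmeas : Measurable X) (hFc : Continuous F) (hmono : Monotone F)
    (h0 : ∀ x, 0 ≤ F x) (h1 : ∀ x, F x ≤ 1)
    (hmapY : Measure.map (fun ω => F (X ω)) ℙ = volume.restrict (Icc (0:ℝ) 1)) (t : ℝ) :
    ∫ ω in {ω | X ω ≤ t}, gg (F (X ω)) ∂ℙ = -(F t * (1 - F t)^2) := by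
  have hint := gg_integrable hXmeas hFc h0 h1
  have hs : MeasurableSet {ω | t < X ω} := measurableSet_lt measurable_const hXmeas
  have hcompl : {ω | X ω ≤ t} = {ω | t < X ω}ᶜ := by
    ext ω; simp [not_lt]
  have := integral_add_compl hs hint
  rw [hcompl]
  have h2 := tail_integral hXmeas hFc hmono h0 h1 hmapY t
  have h3 := total_integral hXmeas hFc hmapY
  linarith [this, h2, h3]

end Omega



lemma ind_int (a b : ℝ) :
    ∫ t, (Ico a b).indicator (fun _ => (1:ℝ)) t ∂volume = max (b - a) 0 := by
  rw [integral_indicator measurableSet_Ico, setIntegral_const, Real.volume_real_Ico,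
    smul_eq_mul, mul_one]

lemma ind_integrable (a b : ℝ) :
    Integrable ((Ico a b).indicator (fun _ => (1:ℝ))) volume :=
  (integrable_indicator_iff measurableSet_Ico).mpr
    (integrableOn_const measure_Ico_lt_top.ne)

lemma gg_abs_le {u : ℝ} (h0 : 0 ≤ u) (h1 : u ≤ 1) : |gg u| ≤ 8 := by
  unfold gg; rw [abs_le]; constructor <;> nlinarith

section Fub
variable {Ω : Type*} [MeasureSpace Ω] [IsProbabilityMeasure (ℙ : Measure Ω)]
  {X : Ω → ℝ} {F : ℝ → ℝ}

lemma fubini_key (hXmeas : Measurable X) (hFc : Continuous F)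
    (h0 : ∀ x, 0 ≤ F x) (h1 : ∀ x, F x ≤ 1)
    (hint1 : Integrable X ℙ)
    (htail : ∀ t, ∫ ω in {ω | t < X ω}, gg (F (X ω)) ∂ℙ = F t * (1 - F t)^2)
    (hiic : ∀ t, ∫ ω in {ω | X ω ≤ t}, gg (F (X ω)) ∂ℙ = -(F t * (1 - F t)^2)) :
    ∫ ω, X ω * gg (F (X ω)) ∂ℙ = ∫ t, F t * (1 - F t)^2 ∂volume ∧
      Integrable (fun t => F t * (1 - F t)^2) volume := by
  set H : Ω → ℝ → ℝ := fun ω t =>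
    ((Ico (0:ℝ) (X ω)).indicator (fun _ => (1:ℝ)) t
      - (Ico (X ω) 0).indicator (fun _ => (1:ℝ)) t) * gg (F (X ω)) with hH
  -- measurability of the uncurried function
  have hS1 : MeasurableSet {p : Ω × ℝ | 0 ≤ p.2 ∧ p.2 < X p.1} :=
    (measurableSet_le measurable_const measurable_snd).inter
      (measurableSet_lt measurable_snd (hXmeas.comp measurable_fst))
  have hS2 : MeasurableSet {p : Ω × ℝ | X p.1 ≤ p.2 ∧ p.2 < 0} :=
    (measurableSet_le (hXmeas.comp measurable_fst) measurable_snd).inter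
      (measurableSet_lt measurable_snd measurable_const)
  have hunc : Measurable (Function.uncurry H) := by
    have e1 : (fun p : Ω × ℝ => (Ico (0:ℝ) (X p.1)).indicator (fun _ => (1:ℝ)) p.2)
        = {p : Ω × ℝ | 0 ≤ p.2 ∧ p.2 < X p.1}.indicator (fun _ => (1:ℝ)) := by
      funext p; simp [Set.indicator_apply, mem_Ico]
    have e2 : (fun p : Ω × ℝ => (Ico (X p.1) (0:ℝ)).indicator (fun _ => (1:ℝ)) p.2)
        = {p : Ω × ℝ | X p.1 ≤ p.2 ∧ p.2 < 0}.indicator (fun _ => (1:ℝ)) := by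
      funext p; simp [Set.indicator_apply, mem_Ico]
    have : Function.uncurry H = fun p : Ω × ℝ =>
        ({p : Ω × ℝ | 0 ≤ p.2 ∧ p.2 < X p.1}.indicator (fun _ => (1:ℝ)) p
          - {p : Ω × ℝ | X p.1 ≤ p.2 ∧ p.2 < 0}.indicator (fun _ => (1:ℝ)) p)
          * gg (F (X p.1)) := by
      funext p
      rw [Function.uncurry, hH]
      simp only [← e1, ← e2]
    rw [this]
    exact (((measurable_const.indicator hS1).sub (measurable_const.indicator hS2)).mul
      (gg_cont.measurable.comp (hFc.measurable.comp (hXmeas.comp measurable_fst))))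
  -- slice integrability
  have hslice : ∀ ω, Integrable (H ω) volume := fun ω =>
    ((ind_integrable _ _).sub (ind_integrable _ _)).mul_const _
  -- norm bound of slice integrals
  have habs : ∀ ω, (∫ t, ‖H ω t‖ ∂volume) ≤ 8 * |X ω| := by
    intro ω
    have hb : ∀ t, ‖H ω t‖ ≤ 8 * ((Ico (0:ℝ) (X ω)).indicator (fun _ => (1:ℝ)) t
        + (Ico (X ω) 0).indicator (fun _ => (1:ℝ)) t) := by
      intro t
      rw [hH, norm_mul, Real.norm_eq_abs, Real.norm_eq_abs]
      have h8 : |gg (F (X ω))| ≤ 8 := gg_abs_le (h0 _) (h1 _)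
      have hind : |(Ico (0:ℝ) (X ω)).indicator (fun _ => (1:ℝ)) t
          - (Ico (X ω) 0).indicator (fun _ => (1:ℝ)) t|
          ≤ (Ico (0:ℝ) (X ω)).indicator (fun _ => (1:ℝ)) t
            + (Ico (X ω) 0).indicator (fun _ => (1:ℝ)) t := by
        have p1 : (0:ℝ) ≤ (Ico (0:ℝ) (X ω)).indicator (fun _ => (1:ℝ)) t :=
          Set.indicator_nonneg (fun _ _ => zero_le_one) t
        have p2 : (0:ℝ) ≤ (Ico (X ω) (0:ℝ)).indicator (fun _ => (1:ℝ)) t :=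
          Set.indicator_nonneg (fun _ _ => zero_le_one) t
        rw [abs_le]; constructor <;> linarith [abs_nonneg (gg (F (X ω)))]
      calc |(Ico (0:ℝ) (X ω)).indicator (fun _ => (1:ℝ)) t
          - (Ico (X ω) 0).indicator (fun _ => (1:ℝ)) t| * |gg (F (X ω))|
          ≤ ((Ico (0:ℝ) (X ω)).indicator (fun _ => (1:ℝ)) t
            + (Ico (X ω) 0).indicator (fun _ => (1:ℝ)) t) * 8 := by
            exact mul_le_mul hind h8 (abs_nonneg _) (add_nonneg
              (Set.indicator_nonneg (fun _ _ => zero_le_one) t)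
              (Set.indicator_nonneg (fun _ _ => zero_le_one) t))
        _ = 8 * _ := by ring
    calc (∫ t, ‖H ω t‖ ∂volume)
        ≤ ∫ t, 8 * ((Ico (0:ℝ) (X ω)).indicator (fun _ => (1:ℝ)) t
          + (Ico (X ω) 0).indicator (fun _ => (1:ℝ)) t) ∂volume := by
          apply integral_mono (hslice ω).norm
            (((ind_integrable _ _).add (ind_integrable _ _)).const_mul 8) hb
      _ = 8 * (max (X ω - 0) 0 + max (0 - X ω) 0) := by
          rw [integral_const_mul, integral_add (ind_integrable _ _) (ind_integrable _ _),
            ind_int, ind_int]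
      _ = 8 * |X ω| := by
          rcases le_total 0 (X ω) with h | h
          · rw [sub_zero, zero_sub, max_eq_left h, max_eq_right (neg_nonpos.mpr h),
              add_zero, abs_of_nonneg h]
          · rw [sub_zero, zero_sub, max_eq_right h, max_eq_left (neg_nonneg.mpr h),
              zero_add, abs_of_nonpos h]
  -- product integrability
  have hprod : Integrable (Function.uncurry H) (Measure.prod ℙ volume) := by
    rw [integrable_prod_iff hunc.aestronglyMeasurable]
    refine ⟨Eventually.of_forall (fun ω => hslice ω), ?_⟩
    refine Integrable.mono (hint1.abs.const_mul 8)
      (hunc.norm.aestronglyMeasurable.integral_prod_right') ?_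
    refine Eventually.of_forall (fun ω => ?_)
    simp only [Function.uncurry_apply_pair]
    rw [Real.norm_eq_abs, Real.norm_eq_abs]
    have hnn : (0:ℝ) ≤ ∫ t, ‖H ω t‖ ∂volume :=
      integral_nonneg (fun t => norm_nonneg _)
    rw [abs_of_nonneg hnn]
    calc (∫ t, ‖H ω t‖ ∂volume) ≤ 8 * |X ω| := habs ω
      _ ≤ abs (8 * |X ω|) := le_abs_self _
  -- swap
  have hswap := integral_integral_swap hprod
  -- inner integral over t
  have hinner : ∀ ω, ∫ t, H ω t ∂volume = X ω * gg (F (X ω)) := by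
    intro ω
    rw [hH]
    simp only
    rw [integral_mul_const, integral_sub (ind_integrable _ _) (ind_integrable _ _),
      ind_int, ind_int]
    congr 1
    rcases le_total 0 (X ω) with h | h
    · rw [sub_zero, zero_sub, max_eq_left h, max_eq_right (neg_nonpos.mpr h), sub_zero]
    · rw [sub_zero, zero_sub, max_eq_right h, max_eq_left (neg_nonneg.mpr h),
        zero_sub, neg_neg]
  -- inner integral over ω
  have houter : ∀ t, ∫ ω, H ω t ∂ℙ = F t * (1 - F t)^2 := by
    intro t
    rcases le_or_gt 0 t with ht | ht
    · have : (fun ω => H ω t)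
          = {ω | t < X ω}.indicator (fun ω => gg (F (X ω))) := by
        funext ω
        rw [hH]
        simp only [Set.indicator_apply, mem_Ico, mem_setOf_eq]
        by_cases hc : t < X ω
        · rw [if_pos ⟨ht, hc⟩, if_neg (by intro hx; linarith [hx.1, hx.2]), if_pos hc]
          ring
        · rw [if_neg (by intro hx; exact hc hx.2), if_neg (by intro hx; linarith [hx.2]),
            if_neg hc]
          ring
      rw [this, integral_indicator (measurableSet_lt measurable_const hXmeas), htail t]
    · have : (fun ω => H ω t)
          = fun ω => -({ω | X ω ≤ t}.indicator (fun ω => gg (F (X ω))) ω) := by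
        funext ω
        rw [hH]
        simp only [Set.indicator_apply, mem_Ico, mem_setOf_eq]
        by_cases hc : X ω ≤ t
        · rw [if_neg (by intro hx; linarith [hx.1]), if_pos ⟨hc, ht⟩, if_pos hc]
          ring
        · rw [if_neg (by intro hx; linarith [hx.1, hx.2]), if_neg (by intro hx; exact hc hx.1),
            if_neg hc]
          ring
      rw [this, integral_neg, integral_indicator (measurableSet_le hXmeas measurable_const),
        hiic t, neg_neg]
  constructor
  · calc ∫ ω, X ω * gg (F (X ω)) ∂ℙ
          = ∫ ω, (∫ t, H ω t ∂volume) ∂ℙ := by simp_rw [hinner]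
      _ = ∫ t, (∫ ω, H ω t ∂ℙ) ∂volume := hswap
      _ = ∫ t, F t * (1 - F t)^2 ∂volume := by simp_rw [houter]
  · have := hprod.integral_prod_right
    have heq : (fun t => ∫ ω, Function.uncurry H (ω, t) ∂ℙ)
        = fun t => F t * (1 - F t)^2 := by
      funext t; exact houter t
    rw [heq] at this
    exact this

end Fub

/-- Let `X` have continuous c.d.f. `F` and finite expectation, and let
`β_i = E[X·F(X)^(i-1)]`, `i = 1,2,3`, be finite. Then `−β₁ + 4β₂ − 3β₃ > 0`. -/
theorem pwm_combination_pos
    {Ω : Type*} [MeasureSpace Ω] [IsProbabilityMeasure (ℙ : Measure Ω)]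
    (X : Ω → ℝ) (hXmeas : Measurable X)
    (F : ℝ → ℝ)
    (hF : ∀ x, F x = (ℙ {ω | X ω ≤ x}).toReal)
    (hFcont : Continuous F)
    (hint1 : Integrable X ℙ)
    (hint2 : Integrable (fun ω => X ω * F (X ω)) ℙ)
    (hint3 : Integrable (fun ω => X ω * (F (X ω)) ^ 2) ℙ) :
    -(∫ ω, X ω ∂ℙ) + 4 * (∫ ω, X ω * F (X ω) ∂ℙ)
      - 3 * (∫ ω, X ω * (F (X ω)) ^ 2 ∂ℙ) > 0 := by
  set μ := Measure.map X ℙ with hμ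
  haveI : IsProbabilityMeasure μ := Measure.isProbabilityMeasure_map hXmeas.aemeasurable
  have hF' : ∀ x, F x = (μ (Iic x)).toReal := by
    intro x
    rw [hF x, hμ, Measure.map_apply hXmeas measurableSet_Iic]
    rfl
  have hcdf : F = cdf μ := F_eq_cdf hF'
  have hmono : Monotone F := hcdf ▸ monotone_cdf μ
  have h0 : ∀ x, 0 ≤ F x := fun x => hcdf ▸ cdf_nonneg μ x
  have h1 : ∀ x, F x ≤ 1 := fun x => hcdf ▸ cdf_le_one μ x
  have hmapY : Measure.map (fun ω => F (X ω)) ℙ = volume.restrict (Icc (0:ℝ) 1) := by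
    have heq : (fun ω => F (X ω)) = F ∘ X := rfl
    rw [heq, ← Measure.map_map hFcont.measurable hXmeas]
    exact map_cdf_uniform hF' hFcont
  have htail := tail_integral hXmeas hFcont hmono h0 h1 hmapY
  have hiic := iic_integral hXmeas hFcont hmono h0 h1 hmapY
  obtain ⟨hkey, hintφ⟩ := fubini_key hXmeas hFcont h0 h1 hint1 htail hiic
  obtain ⟨t₀, ht₀⟩ := exists_F_eq hF' hFcont (by norm_num : (0:ℝ) < 1/2) (by norm_num)
  have hnn : ∀ t, 0 ≤ F t * (1 - F t)^2 := fun t => mul_nonneg (h0 t) (sq_nonneg _)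
  have hφpos : 0 < ∫ t, F t * (1 - F t)^2 ∂volume := by
    rw [integral_pos_iff_support_of_nonneg hnn hintφ]
    have hopen : IsOpen {t | 0 < F t * (1 - F t)^2} :=
      isOpen_lt continuous_const (hFcont.mul ((continuous_const.sub hFcont).pow 2))
    have hne : t₀ ∈ {t | 0 < F t * (1 - F t)^2} := by
      rw [mem_setOf_eq, ht₀]; norm_num
    refine lt_of_lt_of_le (hopen.measure_pos volume ⟨t₀, hne⟩) (measure_mono ?_)
    intro t ht
    exact ne_of_gt ht
  have hsplit : (fun ω => X ω * gg (F (X ω)))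
      = fun ω => (-(X ω) + 4*(X ω * F (X ω))) - 3*(X ω * F (X ω)^2) := by
    funext ω; unfold gg; ring
  have halg : ∫ ω, X ω * gg (F (X ω)) ∂ℙ
      = -(∫ ω, X ω ∂ℙ) + 4 * (∫ ω, X ω * F (X ω) ∂ℙ)
        - 3 * (∫ ω, X ω * (F (X ω)) ^ 2 ∂ℙ) := by
    have i0 : Integrable (fun ω => -(X ω)) ℙ := hint1.neg
    have i2 : Integrable (fun ω => 4 * (X ω * F (X ω))) ℙ := hint2.const_mul 4
    have i1 : Integrable (fun ω => -(X ω) + 4 * (X ω * F (X ω))) ℙ := i0.add i2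
    have i3 : Integrable (fun ω => 3 * (X ω * F (X ω) ^ 2)) ℙ := hint3.const_mul 3
    rw [hsplit, integral_sub i1 i3, integral_add i0 i2,
      integral_neg, integral_const_mul, integral_const_mul]
  linarith
end

section
/- The function ξ ↦ (3^ξ − 1)/(2^ξ − 1), defined on ℝ \ {0} and extended by continuity at 0 by the value log 3 / log 2, is continuous on ℝ and strictly increasing, and as ξ ranges over (−∞, 1), its value ranges over a subset of (1, 2); in particular for every ξ < 1 one has 1 < (3^ξ − 1)/(2^ξ − 1) < 2. -/
open Real Set Filter

noncomputable def myf (ξ : ℝ) : ℝ :=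
  if ξ = 0 then Real.log 3 / Real.log 2
  else ((3 : ℝ) ^ ξ - 1) / ((2 : ℝ) ^ ξ - 1)

lemma hd_rpow {a : ℝ} (ha : 0 < a) (x : ℝ) :
    HasDerivAt (fun x : ℝ => a ^ x) (a ^ x * Real.log a) x :=
  (Real.hasStrictDerivAt_const_rpow ha x).hasDerivAt

-- for ξ < 0 : 3^ξ < 2^ξ
lemma rpow_lt_of_neg {ξ : ℝ} (h : ξ < 0) : (3:ℝ) ^ ξ < 2 ^ ξ := by
  have h1 : ((3:ℝ)/2) ^ ξ < 1 := Real.rpow_lt_one_of_one_lt_of_neg (by norm_num) h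
  rw [Real.div_rpow (by norm_num) (by norm_num), div_lt_one (Real.rpow_pos_of_pos two_pos ξ)] at h1
  exact h1

lemma rpow_lt_of_pos {ξ : ℝ} (h : 0 < ξ) : (2:ℝ) ^ ξ < 3 ^ ξ := by
  have h1 : 1 < ((3:ℝ)/2) ^ ξ :=
    (Real.one_lt_rpow_iff_of_pos (by norm_num)).2 (Or.inl ⟨by norm_num, h⟩)
  rw [Real.div_rpow (by norm_num) (by norm_num), lt_div_iff₀ (Real.rpow_pos_of_pos two_pos ξ),
    one_mul] at h1
  exact h1

noncomputable def φ (ξ : ℝ) : ℝ :=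
  (Real.log 3 - Real.log 2) - Real.log 3 * 2 ^ (-ξ) + Real.log 2 * 3 ^ (-ξ)

lemma hd_phi (ξ : ℝ) :
    HasDerivAt φ (Real.log 3 * Real.log 2 * 2 ^ (-ξ) - Real.log 2 * Real.log 3 * 3 ^ (-ξ)) ξ := by
  have h2 : HasDerivAt (fun ξ : ℝ => (2:ℝ) ^ (-ξ)) (-(2 ^ (-ξ) * Real.log 2)) ξ := by
    simpa [Function.comp_def] using (hd_rpow two_pos (-ξ)).comp ξ (hasDerivAt_neg ξ)
  have h3 : HasDerivAt (fun ξ : ℝ => (3:ℝ) ^ (-ξ)) (-(3 ^ (-ξ) * Real.log 3)) ξ := by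
    simpa [Function.comp_def] using (hd_rpow three_pos (-ξ)).comp ξ (hasDerivAt_neg ξ)
  have := ((hasDerivAt_const ξ (Real.log 3 - Real.log 2)).sub
    (h2.const_mul (Real.log 3))).add (h3.const_mul (Real.log 2))
  convert this using 1
  · rfl
  · rfl
  · rfl
  · ring

lemma phi_pos {ξ : ℝ} (h : ξ ≠ 0) : 0 < φ ξ := by
  have hphi0 : φ 0 = 0 := by simp [φ]
  rcases h.lt_or_gt with hneg | hpos
  · have hanti : StrictAntiOn φ (Iic 0) := by
      refine strictAntiOn_of_hasDerivWithinAt_neg (convex_Iic 0) (fun x _ => (hd_phi x).continuousAt.continuousWithinAt)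
        (fun x hx => ((hd_phi x).hasDerivWithinAt)) (fun x hx => ?_)
      rw [interior_Iic] at hx
      have hlt : (2:ℝ) ^ (-x) < 3 ^ (-x) := rpow_lt_of_pos (by simpa using neg_pos.2 hx.out)
      have hl2 : 0 < Real.log 2 := Real.log_pos (by norm_num)
      have hl3 : 0 < Real.log 3 := Real.log_pos (by norm_num)
      nlinarith [mul_pos hl2 hl3]
    have := hanti (mem_Iic.2 hneg.le) (mem_Iic.2 le_rfl) hneg
    rwa [hphi0] at this
  · have hmono : StrictMonoOn φ (Ici 0) := by
      refine strictMonoOn_of_hasDerivWithinAt_pos (convex_Ici 0) (fun x _ => (hd_phi x).continuousAt.continuousWithinAt)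
        (fun x hx => ((hd_phi x).hasDerivWithinAt)) (fun x hx => ?_)
      rw [interior_Ici] at hx
      have hlt : (3:ℝ) ^ (-x) < 2 ^ (-x) := rpow_lt_of_neg (by simpa using neg_neg_iff_pos.2 hx.out)
      have hl2 : 0 < Real.log 2 := Real.log_pos (by norm_num)
      have hl3 : 0 < Real.log 3 := Real.log_pos (by norm_num)
      nlinarith [mul_pos hl2 hl3]
    have := hmono (mem_Ici.2 le_rfl) (mem_Ici.2 hpos.le) hpos
    rwa [hphi0] at this

lemma two_rpow_ne_one {ξ : ℝ} (h : ξ ≠ 0) : (2:ℝ) ^ ξ - 1 ≠ 0 := by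
  rcases h.lt_or_gt with hneg | hpos
  · have : (2:ℝ) ^ ξ < 1 := Real.rpow_lt_one_of_one_lt_of_neg (by norm_num) hneg
    linarith
  · have : (1:ℝ) < 2 ^ ξ := Real.one_lt_rpow_iff_of_pos two_pos |>.2 (Or.inl ⟨one_lt_two, hpos⟩)
    linarith

-- numerator positivity
lemma num_pos {ξ : ℝ} (h : ξ ≠ 0) :
    0 < Real.log 3 * 3 ^ ξ * (2 ^ ξ - 1) - Real.log 2 * 2 ^ ξ * ((3:ℝ) ^ ξ - 1) := by
  have key : Real.log 3 * 3 ^ ξ * (2 ^ ξ - 1) - Real.log 2 * 2 ^ ξ * ((3:ℝ) ^ ξ - 1)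
      = 2 ^ ξ * 3 ^ ξ * φ ξ := by
    have e2 : (2:ℝ) ^ ξ * 2 ^ (-ξ) = 1 := by
      rw [← Real.rpow_add two_pos]; simp
    have e3 : (3:ℝ) ^ ξ * 3 ^ (-ξ) = 1 := by
      rw [← Real.rpow_add three_pos]; simp
    simp only [φ]
    linear_combination (Real.log 3 * (3:ℝ)^ξ) * e2 - (Real.log 2 * (2:ℝ)^ξ) * e3
  rw [key]
  exact mul_pos (mul_pos (Real.rpow_pos_of_pos two_pos ξ) (Real.rpow_pos_of_pos three_pos ξ))
    (phi_pos h)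

lemma hd_g {ξ : ℝ} (h : ξ ≠ 0) :
    HasDerivAt (fun ξ : ℝ => ((3:ℝ) ^ ξ - 1) / ((2:ℝ) ^ ξ - 1))
      ((Real.log 3 * 3 ^ ξ * (2 ^ ξ - 1) - Real.log 2 * 2 ^ ξ * ((3:ℝ) ^ ξ - 1))
        / ((2:ℝ) ^ ξ - 1) ^ 2) ξ := by
  have := ((hd_rpow three_pos ξ).sub_const 1).div ((hd_rpow two_pos ξ).sub_const 1)
    (two_rpow_ne_one h)
  convert this using 1
  · rfl
  · rfl
  · rfl
  · ring

lemma f_eq_g_near {ξ : ℝ} (h : ξ ≠ 0) :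
    myf =ᶠ[nhds ξ] fun ξ : ℝ => ((3:ℝ) ^ ξ - 1) / ((2:ℝ) ^ ξ - 1) := by
  filter_upwards [isOpen_compl_singleton.mem_nhds (by simpa using h)] with x hx
  simp only [myf, if_neg (by simpa using hx)]

lemma hd_f {ξ : ℝ} (h : ξ ≠ 0) :
    HasDerivAt myf
      ((Real.log 3 * 3 ^ ξ * (2 ^ ξ - 1) - Real.log 2 * 2 ^ ξ * ((3:ℝ) ^ ξ - 1))
        / ((2:ℝ) ^ ξ - 1) ^ 2) ξ :=
  (hd_g h).congr_of_eventuallyEq (f_eq_g_near h)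

lemma tendsto_g :
    Tendsto (fun ξ : ℝ => ((3:ℝ) ^ ξ - 1) / ((2:ℝ) ^ ξ - 1)) (nhdsWithin 0 {0}ᶜ)
      (nhds (Real.log 3 / Real.log 2)) := by
  have h3 : Tendsto (fun ξ : ℝ => ((3:ℝ) ^ ξ - 1) / ξ) (nhdsWithin 0 {0}ᶜ)
      (nhds (Real.log 3)) := by
    have h := (hasDerivAt_iff_tendsto_slope).1 (hd_rpow three_pos 0)
    rw [Real.rpow_zero, one_mul] at h
    exact h.congr fun x => by simp [slope_def_field, Real.rpow_zero]
  have h2 : Tendsto (fun ξ : ℝ => ((2:ℝ) ^ ξ - 1) / ξ) (nhdsWithin 0 {0}ᶜ)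
      (nhds (Real.log 2)) := by
    have h := (hasDerivAt_iff_tendsto_slope).1 (hd_rpow two_pos 0)
    rw [Real.rpow_zero, one_mul] at h
    exact h.congr fun x => by simp [slope_def_field, Real.rpow_zero]
  have := h3.div h2 (by positivity)
  refine this.congr' ?_
  filter_upwards [self_mem_nhdsWithin] with x hx
  have hx0 : x ≠ 0 := by simpa using hx
  simp only [Pi.div_apply]
  field_simp

lemma cont_f : Continuous myf := by
  rw [continuous_iff_continuousAt]
  intro x
  rcases eq_or_ne x 0 with rfl | hx
  · have hf0 : myf 0 = Real.log 3 / Real.log 2 := by simp [myf]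
    rw [ContinuousAt, hf0, ← nhdsNE_sup_pure 0]
    rw [tendsto_sup]
    constructor
    · refine tendsto_g.congr' ?_
      filter_upwards [self_mem_nhdsWithin] with y hy
      simp only [myf, if_neg (by simpa using hy)]
    · simpa [hf0] using tendsto_pure_nhds myf 0
  · exact (hd_f hx).differentiableAt.continuousAt

lemma mono_f : StrictMono myf := by
  have hIci : StrictMonoOn myf (Ici 0) := by
    refine strictMonoOn_of_hasDerivWithinAt_pos (convex_Ici 0)
      (cont_f.continuousOn) (fun x hx => (hd_f ?_).hasDerivWithinAt) (fun x hx => ?_)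
    · rw [interior_Ici] at hx; exact ne_of_gt hx
    · rw [interior_Ici] at hx
      have hx0 : x ≠ 0 := ne_of_gt hx
      exact div_pos (num_pos hx0) (pow_two_pos_of_ne_zero (two_rpow_ne_one hx0))
  have hIic : StrictMonoOn myf (Iic 0) := by
    refine strictMonoOn_of_hasDerivWithinAt_pos (convex_Iic 0)
      (cont_f.continuousOn) (fun x hx => (hd_f ?_).hasDerivWithinAt) (fun x hx => ?_)
    · rw [interior_Iic] at hx; exact ne_of_lt hx
    · rw [interior_Iic] at hx
      have hx0 : x ≠ 0 := ne_of_lt hx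
      exact div_pos (num_pos hx0) (pow_two_pos_of_ne_zero (two_rpow_ne_one hx0))
  intro s t hst
  rcases le_or_gt 0 s with hs | hs
  · exact hIci (mem_Ici.2 hs) (mem_Ici.2 (le_trans hs hst.le)) hst
  · rcases le_or_gt t 0 with ht | ht
    · exact hIic (mem_Iic.2 hs.le) (mem_Iic.2 ht) hst
    · exact lt_trans (hIic (mem_Iic.2 hs.le) (mem_Iic.2 le_rfl) hs)
        (hIci (mem_Ici.2 le_rfl) (mem_Ici.2 ht.le) ht)

lemma f_one : myf 1 = 2 := by
  norm_num [myf]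

lemma one_lt_f {ξ : ℝ} : 1 < myf ξ := by
  rcases lt_trichotomy ξ 0 with hneg | rfl | hpos
  · have h32 : (3:ℝ) ^ ξ < 2 ^ ξ := rpow_lt_of_neg hneg
    have h2lt : (2:ℝ) ^ ξ < 1 := Real.rpow_lt_one_of_one_lt_of_neg (by norm_num) hneg
    rw [myf, if_neg (ne_of_lt hneg)]
    have heq : ((3:ℝ)^ξ - 1)/((2:ℝ)^ξ - 1) = (1 - 3^ξ)/(1 - 2^ξ) := by
      rw [div_eq_div_iff (by linarith) (by linarith)]
      ring
    rw [heq, lt_div_iff₀ (by linarith), one_mul]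
    linarith
  · rw [myf, if_pos rfl, lt_div_iff₀ (Real.log_pos (by norm_num)), one_mul]
    exact Real.log_lt_log (by norm_num) (by norm_num)
  · have h23 : (2:ℝ) ^ ξ < 3 ^ ξ := rpow_lt_of_pos hpos
    have h2gt : (1:ℝ) < 2 ^ ξ := Real.one_lt_rpow_iff_of_pos two_pos |>.2 (Or.inl ⟨one_lt_two, hpos⟩)
    rw [myf, if_neg (ne_of_gt hpos), lt_div_iff₀ (by linarith), one_mul]
    linarith


/-- The function `ξ ↦ (3^ξ − 1)/(2^ξ − 1)`, extended by `log 3 / log 2` at `0`, is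
continuous on `ℝ`, strictly increasing, and for every `ξ < 1` satisfies
`1 < (3^ξ − 1)/(2^ξ − 1) < 2`. -/
theorem ratio_rpow_continuous_strictMono_mapsTo :
    Continuous (fun ξ : ℝ =>
        if ξ = 0 then Real.log 3 / Real.log 2
        else ((3 : ℝ) ^ ξ - 1) / ((2 : ℝ) ^ ξ - 1)) ∧
      StrictMono (fun ξ : ℝ =>
        if ξ = 0 then Real.log 3 / Real.log 2
        else ((3 : ℝ) ^ ξ - 1) / ((2 : ℝ) ^ ξ - 1)) ∧
      ∀ ξ : ℝ, ξ < 1 →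
        1 < (if ξ = 0 then Real.log 3 / Real.log 2
              else ((3 : ℝ) ^ ξ - 1) / ((2 : ℝ) ^ ξ - 1)) ∧
          (if ξ = 0 then Real.log 3 / Real.log 2
            else ((3 : ℝ) ^ ξ - 1) / ((2 : ℝ) ^ ξ - 1)) < 2 := by
  refine ⟨cont_f, mono_f, fun ξ hξ => ⟨one_lt_f, ?_⟩⟩
  have := mono_f hξ
  rwa [f_one] at this
end

section
/- Let X be a random variable with c.d.f. F equal to the GEV c.d.f. G_{μ,σ,ξ} with σ > 0 and 0 < ξ < 1 (so E[|X|] < ∞), and let β_1 = E[X] and β_2 = E[X·F(X)]. Then 2β_2 − β_1 = (σ/ξ)·Γ(1−ξ)·(2^ξ − 1), where Γ is the Gamma function. -/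
/-!
If `E` is a standard exponential variable, then `T E` with `T u = μ + (σ/ξ)(u^(-ξ) - 1)` has
c.d.f. `G = G_{μ,σ,ξ}`: `T` is decreasing on `(0, ∞)` and `G (T u) = exp (-u)`.
Hence `β₁ = ∫ T(u) e^(-u) du` and, since `G (T E) = exp (-E)`, `β₂ = ∫ T(u) e^(-2u) du`.
Both are Gamma integrals,
`∫₀^∞ T(u) e^(-cu) du = (μ - σ/ξ)/c + (σ/ξ) c^(ξ-1) Γ(1-ξ)`,
and the terms in `μ - σ/ξ` cancel in `2β₂ - β₁`.
-/

open MeasureTheory ProbabilityTheory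

noncomputable def gevCDF (μ σ ξ x : ℝ) : ℝ :=
  if 0 < 1 + ξ * (x - μ) / σ then
    Real.exp (-(1 + ξ * (x - μ) / σ) ^ (-1 / ξ))
  else if 0 < ξ then 0 else 1

open Real Set

lemma expMeasure_eq_withDensity (r : ℝ) :
    expMeasure r
      = (volume.restrict (Ioi 0)).withDensity (fun u => ENNReal.ofReal (r * exp (-(r * u)))) := by
  rw [expMeasure, gammaMeasure, ← withDensity_indicator measurableSet_Ioi]
  refine withDensity_congr_ae ?_
  filter_upwards [Measure.ae_ne volume (0 : ℝ)] with u hu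
  rcases hu.lt_or_gt with h | h
  · simp [gammaPDF_of_neg h, h.not_gt]
  · simp [gammaPDF_of_nonneg h.le, h]

lemma ae_expMeasure_pos (r : ℝ) : ∀ᵐ u ∂expMeasure r, 0 < u := by
  rw [expMeasure_eq_withDensity]
  exact withDensity_absolutelyContinuous _ _ (ae_restrict_mem measurableSet_Ioi)

lemma integral_expMeasure {r : ℝ} (hr : 0 ≤ r) (g : ℝ → ℝ) :
    ∫ u, g u ∂expMeasure r = ∫ u in Ioi 0, r * exp (-(r * u)) * g u := by
  rw [expMeasure_eq_withDensity, integral_withDensity_eq_integral_toReal_smul (by fun_prop)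
    (ae_of_all _ fun _ => ENNReal.ofReal_lt_top)]
  simp only [ENNReal.toReal_ofReal (by positivity : 0 ≤ r * exp _), smul_eq_mul]

lemma expMeasure_Ici {r a : ℝ} (hr : 0 < r) (ha : 0 < a) :
    expMeasure r (Ici a) = ENNReal.ofReal (exp (-(r * a))) := by
  have hint : IntegrableOn (fun u => r * exp (-(r * u))) (Ioi a) := by
    have h := exp_neg_integrableOn_Ioi a hr
    simp only [neg_mul] at h
    exact h.const_mul r
  have hval : ∫ u in Ioi a, r * exp (-(r * u)) = exp (-(r * a)) := by
    rw [integral_const_mul]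
    simp_rw [← neg_mul]
    rw [integral_exp_mul_Ioi (neg_lt_zero.mpr hr)]
    field_simp
  rw [expMeasure_eq_withDensity, withDensity_apply _ measurableSet_Ici,
    Measure.restrict_restrict measurableSet_Ici, inter_eq_left.mpr (Ici_subset_Ioi.mpr ha),
    setLIntegral_congr Ioi_ae_eq_Ici.symm, ← hval,
    ofReal_integral_eq_lintegral_ofReal hint (ae_of_all _ fun _ => by positivity)]

noncomputable def gevOfExp (μ σ ξ u : ℝ) : ℝ := μ + σ / ξ * (u ^ (-ξ) - 1)

section

variable {μ σ ξ : ℝ}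

lemma measurable_gevCDF : Measurable (gevCDF μ σ ξ) := by
  unfold gevCDF
  exact Measurable.ite (measurableSet_lt measurable_const (by fun_prop)) (by fun_prop)
    measurable_const

lemma measurable_gevOfExp : Measurable (gevOfExp μ σ ξ) := by
  unfold gevOfExp; fun_prop

lemma one_add_mul_gevOfExp_sub_div (hσ : σ ≠ 0) (hξ : ξ ≠ 0) (u : ℝ) :
    1 + ξ * (gevOfExp μ σ ξ u - μ) / σ = u ^ (-ξ) := by
  unfold gevOfExp; field_simp; ring

lemma gevCDF_gevOfExp (hσ : σ ≠ 0) (hξ : ξ ≠ 0) {u : ℝ} (hu : 0 < u) :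
    gevCDF μ σ ξ (gevOfExp μ σ ξ u) = exp (-u) := by
  rw [gevCDF, one_add_mul_gevOfExp_sub_div hσ hξ, if_pos (by positivity), ← rpow_mul hu.le,
    show -ξ * (-1 / ξ) = 1 by field_simp, rpow_one]

lemma gevOfExp_le_iff (hσ : 0 < σ) (hξ : 0 < ξ) (u x : ℝ) :
    gevOfExp μ σ ξ u ≤ x ↔ u ^ (-ξ) ≤ 1 + ξ * (x - μ) / σ := by
  rw [← one_add_mul_gevOfExp_sub_div hσ.ne' hξ.ne' u, add_le_add_iff_left,
    div_le_div_iff_of_pos_right hσ, mul_le_mul_iff_right₀ hξ, sub_le_sub_iff_right]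

lemma expMeasure_one_gevOfExp_preimage_Iic (hσ : 0 < σ) (hξ : 0 < ξ) (x : ℝ) :
    expMeasure 1 (gevOfExp μ σ ξ ⁻¹' Iic x) = ENNReal.ofReal (gevCDF μ σ ξ x) := by
  set s := 1 + ξ * (x - μ) / σ
  by_cases hs : 0 < s
  · have hpre : gevOfExp μ σ ξ ⁻¹' Iic x =ᵐ[expMeasure 1] Ici (s ^ (-ξ)⁻¹) := by
      filter_upwards [ae_expMeasure_pos 1] with u hu
      exact propext <| (gevOfExp_le_iff hσ hξ u x).trans
        (rpow_inv_le_iff_of_neg hs hu (neg_lt_zero.mpr hξ)).symm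
    rw [measure_congr hpre, expMeasure_Ici one_pos (by positivity), one_mul, gevCDF, if_pos hs,
      inv_neg, neg_div, one_div]
  · have hpre : gevOfExp μ σ ξ ⁻¹' Iic x =ᵐ[expMeasure 1] (∅ : Set ℝ) := by
      filter_upwards [ae_expMeasure_pos 1] with u hu
      refine propext <| iff_false_intro fun hle => hs ?_
      exact (rpow_pos_of_pos hu _).trans_le ((gevOfExp_le_iff hσ hξ u x).mp hle)
    rw [measure_congr hpre, measure_empty, gevCDF, if_neg hs, if_pos hξ, ENNReal.ofReal_zero]

lemma map_eq_map_gevOfExp_expMeasure_one {Ω : Type*} [MeasurableSpace Ω] {P : Measure Ω}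
    [IsFiniteMeasure P] {X : Ω → ℝ} (hX : Measurable X) (hσ : 0 < σ) (hξ : 0 < ξ)
    (hcdf : ∀ x, (P {ω | X ω ≤ x}).toReal = gevCDF μ σ ξ x) :
    P.map X = (expMeasure 1).map (gevOfExp μ σ ξ) := by
  refine Measure.ext_of_Iic _ _ fun x => ?_
  rw [Measure.map_apply hX measurableSet_Iic,
    Measure.map_apply measurable_gevOfExp measurableSet_Iic,
    expMeasure_one_gevOfExp_preimage_Iic hσ hξ, ← hcdf,
    ENNReal.ofReal_toReal (measure_ne_top _ _)]
  rfl

lemma integral_gevOfExp_mul_exp_neg_mul (hξ : ξ < 1) {c : ℝ} (hc : 0 < c) :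
    ∫ u in Ioi 0, gevOfExp μ σ ξ u * exp (-(c * u))
      = (μ - σ / ξ) / c + σ / ξ * ((1 / c) ^ (1 - ξ) * Gamma (1 - ξ)) := by
  have hpow : IntegrableOn (fun u => u ^ (-ξ) * exp (-(c * u))) (Ioi 0) := by
    simpa using integrableOn_rpow_mul_exp_neg_mul_rpow (by linarith : -1 < -ξ) one_pos hc
  have hexp : IntegrableOn (fun u => exp (-(c * u))) (Ioi 0) := by
    simpa [neg_mul] using exp_neg_integrableOn_Ioi 0 hc
  have hexp_integral : ∫ u in Ioi 0, exp (-(c * u)) = 1 / c := by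
    simpa [neg_mul] using integral_exp_mul_Ioi (neg_lt_zero.mpr hc) 0
  have hsplit : ∀ u, gevOfExp μ σ ξ u * exp (-(c * u))
      = (μ - σ / ξ) * exp (-(c * u)) + σ / ξ * (u ^ (-ξ) * exp (-(c * u))) := by
    intro u; unfold gevOfExp; ring
  simp_rw [hsplit]
  rw [integral_add (hexp.const_mul _) (hpow.const_mul _), integral_const_mul, integral_const_mul,
    ← integral_rpow_mul_exp_neg_mul_Ioi (by linarith : 0 < 1 - ξ) hc, sub_sub_cancel_left,
    hexp_integral, div_eq_mul_one_div (μ - σ / ξ)]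

end

theorem gev_pwm_scale_relation_general
    {Ω : Type*} [MeasureSpace Ω] [IsProbabilityMeasure (ℙ : Measure Ω)]
    (X : Ω → ℝ) (hX : Measurable X)
    (μ σ ξ : ℝ) (hσ : 0 < σ) (hξ0 : 0 < ξ) (hξ1 : ξ < 1)
    (hcdf : ∀ x, (ℙ {ω | X ω ≤ x}).toReal = gevCDF μ σ ξ x) :
    2 * (∫ ω, X ω * gevCDF μ σ ξ (X ω) ∂ℙ) - (∫ ω, X ω ∂ℙ)
      = σ / ξ * Real.Gamma (1 - ξ) * ((2 : ℝ) ^ ξ - 1) := by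
  have hlaw := map_eq_map_gevOfExp_expMeasure_one hX hσ hξ0 hcdf
  have hrepr : ∀ g : ℝ → ℝ, Measurable g →
      ∫ ω, g (X ω) ∂ℙ = ∫ u in Ioi 0, exp (-u) * g (gevOfExp μ σ ξ u) := by
    intro g hg
    rw [← integral_map hX.aemeasurable hg.aestronglyMeasurable, hlaw,
      integral_map measurable_gevOfExp.aemeasurable hg.aestronglyMeasurable,
      integral_expMeasure zero_le_one]
    simp only [one_mul]
  have hβ₁ : ∫ ω, X ω ∂ℙ = ∫ u in Ioi 0, gevOfExp μ σ ξ u * exp (-(1 * u)) := by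
    simp_rw [one_mul, mul_comm (gevOfExp μ σ ξ _)]
    exact hrepr id measurable_id
  have hβ₂ : ∫ ω, X ω * gevCDF μ σ ξ (X ω) ∂ℙ
      = ∫ u in Ioi 0, gevOfExp μ σ ξ u * exp (-(2 * u)) := by
    rw [hrepr (fun x => x * gevCDF μ σ ξ x) (measurable_id.mul measurable_gevCDF)]
    refine setIntegral_congr_fun measurableSet_Ioi fun u hu => ?_
    rw [gevCDF_gevOfExp hσ.ne' hξ0.ne' hu, two_mul, neg_add, exp_add]
    ring
  have hpow_two : 2 * (1 / 2 : ℝ) ^ (1 - ξ) = 2 ^ ξ := by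
    rw [one_div, inv_rpow zero_le_two, ← rpow_neg zero_le_two, neg_sub, rpow_sub_one two_ne_zero]
    ring
  rw [hβ₁, hβ₂, integral_gevOfExp_mul_exp_neg_mul hξ1 two_pos,
    integral_gevOfExp_mul_exp_neg_mul hξ1 one_pos, div_one, div_one, one_rpow]
  linear_combination σ / ξ * Gamma (1 - ξ) * hpow_two

/-- If `X` has GEV c.d.f. `G_{μ,σ,ξ}` with `σ > 0` and `0 < ξ < 1` (so `E|X| < ∞`), and
`β₁ = E[X]`, `β₂ = E[X·F(X)]`, then `2β₂ − β₁ = (σ/ξ)·Γ(1−ξ)·(2^ξ − 1)`. -/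
theorem gev_pwm_scale_relation
    {Ω : Type*} [MeasureSpace Ω] [IsProbabilityMeasure (ℙ : Measure Ω)]
    (X : Ω → ℝ) (hX : Measurable X)
    (μ σ ξ : ℝ) (hσ : 0 < σ) (hξ0 : 0 < ξ) (hξ1 : ξ < 1)
    (hcdf : ∀ x, (ℙ {ω | X ω ≤ x}).toReal = gevCDF μ σ ξ x)
    (hint1 : Integrable X ℙ)
    (hint2 : Integrable (fun ω => X ω * gevCDF μ σ ξ (X ω)) ℙ) :
    2 * (∫ ω, X ω * gevCDF μ σ ξ (X ω) ∂ℙ) - (∫ ω, X ω ∂ℙ)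
      = σ / ξ * Real.Gamma (1 - ξ) * ((2 : ℝ) ^ ξ - 1) :=
  gev_pwm_scale_relation_general X hX μ σ ξ hσ hξ0 hξ1 hcdf
end

section
/- Let g : ℝ → ℝ be defined by g(x) = (3^x − 1)/(2^x − 1) for x ≠ 0 and g(0) = log 3/log 2. Then g is injective on (−∞, 1), so that for every r ∈ g((−∞,1)) there is a unique ξ < 1 with (3^ξ − 1)/(2^ξ − 1) = r (uniqueness of the PWM shape-parameter equation's solution). -/
open Real Set Filter Topology

private lemma pwm_key_ineq {c : ℝ} (hc : 1 < c) {t : ℝ} (ht : 0 < t) (ht1 : t ≠ 1) :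
    t ^ c - 1 < c * t ^ (c - 1) * (t - 1) := by
  have hderiv : ∀ x : ℝ, x ≠ 0 → HasDerivAt (fun y : ℝ => y ^ c) (c * x ^ (c - 1)) x := by
    intro x hx
    simpa [mul_comm] using Real.hasDerivAt_rpow_const (x := x) (p := c) (Or.inl hx)
  have hcont : ContinuousOn (fun y : ℝ => y ^ c) (univ : Set ℝ) := by
    intro x _
    exact (Real.continuousAt_rpow_const x c (Or.inr (by linarith))).continuousWithinAt
  rcases lt_or_gt_of_ne ht1 with h | h
  · -- t < 1
    obtain ⟨ξ, hξ, hξeq⟩ := exists_hasDerivAt_eq_slope (fun y : ℝ => y ^ c)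
      (fun x => c * x ^ (c - 1)) h (hcont.mono (subset_univ _))
      (fun x hx => hderiv x (by linarith [hx.1]))
    -- hξeq : c * ξ ^ (c-1) = (1^c - t^c)/(1 - t)
    have hξ0 : 0 < ξ := lt_trans ht hξ.1
    have hlt : t ^ (c - 1) < ξ ^ (c - 1) :=
      Real.rpow_lt_rpow ht.le hξ.1 (by linarith)
    have h1t : (0:ℝ) < 1 - t := by linarith
    rw [Real.one_rpow] at hξeq
    have : c * t ^ (c - 1) < (1 - t ^ c) / (1 - t) := by
      rw [← hξeq]
      have hcpos : (0:ℝ) < c := by linarith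
      nlinarith
    rw [lt_div_iff₀ h1t] at this
    nlinarith
  · -- 1 < t
    obtain ⟨ξ, hξ, hξeq⟩ := exists_hasDerivAt_eq_slope (fun y : ℝ => y ^ c)
      (fun x => c * x ^ (c - 1)) h (hcont.mono (subset_univ _))
      (fun x hx => hderiv x (by linarith [hx.1]))
    have hξ0 : 0 < ξ := by linarith [hξ.1]
    have hlt : ξ ^ (c - 1) < t ^ (c - 1) :=
      Real.rpow_lt_rpow hξ0.le hξ.2 (by linarith)
    have ht1' : (0:ℝ) < t - 1 := by linarith
    rw [Real.one_rpow] at hξeq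
    have : (t ^ c - 1) / (t - 1) < c * t ^ (c - 1) := by
      rw [← hξeq]
      have hcpos : (0:ℝ) < c := by linarith
      nlinarith
    rw [div_lt_iff₀ ht1'] at this
    nlinarith

private lemma pwm_F_mono {c : ℝ} (hc : 1 < c) :
    StrictMonoOn (fun t : ℝ => if t = 1 then c else (t ^ c - 1) / (t - 1)) (Ioi 0) := by
  set F : ℝ → ℝ := fun t => if t = 1 then c else (t ^ c - 1) / (t - 1) with hF
  -- continuity of F within any set at 1
  have hd1 : HasDerivAt (fun y : ℝ => y ^ c) c 1 := by
    simpa using Real.hasDerivAt_rpow_const (x := (1:ℝ)) (p := c) (Or.inl one_ne_zero)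
  have hslope : Tendsto (slope (fun y : ℝ => y ^ c) 1) (𝓝[≠] (1:ℝ)) (𝓝 c) :=
    hasDerivAt_iff_tendsto_slope.mp hd1
  have hFtendsto : Tendsto F (𝓝[≠] (1:ℝ)) (𝓝 c) := by
    refine hslope.congr' ?_
    filter_upwards [self_mem_nhdsWithin] with x hx
    have hx1 : x ≠ 1 := hx
    simp [slope, hF, hx1, Real.one_rpow, div_eq_inv_mul]
  have hcw : ∀ s : Set ℝ, ContinuousWithinAt F s 1 := by
    intro s
    rw [← continuousWithinAt_diff_self]
    have : F 1 = c := by simp [hF]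
    rw [ContinuousWithinAt, this]
    exact hFtendsto.mono_left (nhdsWithin_mono _ (by intro x hx; exact hx.2))
  -- continuity of F at points ≠ 1, > 0
  have hca : ∀ t : ℝ, 0 < t → t ≠ 1 → ContinuousAt F t := by
    intro t ht ht1
    have hq : ContinuousAt (fun x : ℝ => (x ^ c - 1) / (x - 1)) t := by
      exact ContinuousAt.div
        (((Real.continuousAt_rpow_const t c (Or.inl ht.ne'))).sub continuousAt_const)
        ((continuousAt_id).sub continuousAt_const) (sub_ne_zero.mpr ht1)
    refine hq.congr ?_
    have hnhds : {x : ℝ | x ≠ 1} ∈ 𝓝 t := isOpen_ne.mem_nhds ht1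
    filter_upwards [hnhds] with x hx
    simp [hF, hx]
  -- derivative of F at points ≠ 1, > 0
  have hder : ∀ t : ℝ, 0 < t → t ≠ 1 → 0 < deriv F t := by
    intro t ht ht1
    have hq : HasDerivAt (fun x : ℝ => (x ^ c - 1) / (x - 1))
        ((c * t ^ (c - 1) * (t - 1) - (t ^ c - 1) * 1) / (t - 1) ^ 2) t := by
      refine HasDerivAt.div ?_ ?_ (sub_ne_zero.mpr ht1)
      · simpa [mul_comm] using
          (Real.hasDerivAt_rpow_const (x := t) (p := c) (Or.inl ht.ne')).sub_const 1
      · simpa using (hasDerivAt_id t).sub_const 1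
    have hFq : HasDerivAt F ((c * t ^ (c - 1) * (t - 1) - (t ^ c - 1) * 1) / (t - 1) ^ 2) t := by
      refine hq.congr_of_eventuallyEq ?_
      have hnhds : {x : ℝ | x ≠ 1} ∈ 𝓝 t := isOpen_ne.mem_nhds ht1
      filter_upwards [hnhds] with x hx
      simp [hF, hx]
    rw [hFq.deriv]
    have hnum : 0 < c * t ^ (c - 1) * (t - 1) - (t ^ c - 1) * 1 := by
      have := pwm_key_ineq hc ht ht1; linarith
    have hden : 0 < (t - 1) ^ 2 := by
      have h0 : t - 1 ≠ 0 := sub_ne_zero.mpr ht1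
      positivity
    exact div_pos hnum hden
  -- strict mono on Ioc 0 1
  have h1 : StrictMonoOn F (Ioc 0 1) := by
    refine strictMonoOn_of_deriv_pos (convex_Ioc 0 1) ?_ ?_
    · intro x hx
      rcases eq_or_ne x 1 with rfl | hx1
      · exact hcw _
      · exact (hca x hx.1 hx1).continuousWithinAt
    · rw [interior_Ioc]
      intro x hx
      exact hder x hx.1 (ne_of_lt hx.2)
  -- strict mono on Ici 1
  have h2 : StrictMonoOn F (Ici 1) := by
    refine strictMonoOn_of_deriv_pos (convex_Ici 1) ?_ ?_
    · intro x hx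
      rcases eq_or_ne x 1 with rfl | hx1
      · exact hcw _
      · exact (hca x (by linarith [mem_Ici.mp hx]) hx1).continuousWithinAt
    · rw [interior_Ici]
      intro x hx
      exact hder x (by linarith [mem_Ioi.mp hx]) (ne_of_gt hx)
  -- glue
  intro s hs t ht hst
  rcases le_or_gt s 1 with hs1 | hs1
  · rcases le_or_gt t 1 with ht1 | ht1
    · exact h1 ⟨hs, hs1⟩ ⟨ht, ht1⟩ hst
    · rcases eq_or_lt_of_le hs1 with rfl | hs1'
      · exact h2 (Set.mem_Ici.mpr (le_refl _)) ht1.le ht1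
      · calc F s < F 1 := h1 ⟨hs, hs1⟩ ⟨one_pos, le_refl _⟩ hs1'
          _ < F t := h2 (Set.mem_Ici.mpr (le_refl _)) ht1.le ht1
  · exact h2 hs1.le (hs1.trans hst).le hst

/-- The function `g(x) = (3^x − 1)/(2^x − 1)` for `x ≠ 0`, with `g(0) = log 3/log 2`,
is injective on `(−∞, 1)`; hence for every `r` in the image `g((−∞,1))` there is a
unique `ξ < 1` with `g(ξ) = r` (unique solvability of the PWM shape equation). -/
theorem pwm_shape_equation_unique_solution :
    Set.InjOn (fun x : ℝ =>
        if x = 0 then Real.log 3 / Real.log 2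
        else ((3 : ℝ) ^ x - 1) / ((2 : ℝ) ^ x - 1)) (Set.Iio 1) ∧
      ∀ r ∈ (fun x : ℝ =>
          if x = 0 then Real.log 3 / Real.log 2
          else ((3 : ℝ) ^ x - 1) / ((2 : ℝ) ^ x - 1)) '' (Set.Iio 1),
        ∃! ξ : ℝ, ξ < 1 ∧
          (if ξ = 0 then Real.log 3 / Real.log 2
            else ((3 : ℝ) ^ ξ - 1) / ((2 : ℝ) ^ ξ - 1)) = r := by
  set c : ℝ := Real.log 3 / Real.log 2 with hcdef
  have hlog2 : (0:ℝ) < Real.log 2 := Real.log_pos (by norm_num)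
  have hlog23 : Real.log 2 < Real.log 3 := Real.log_lt_log (by norm_num) (by norm_num)
  have hc : 1 < c := (one_lt_div hlog2).mpr hlog23
  have h2c : (2:ℝ) ^ c = 3 := by
    have : c = Real.logb 2 3 := rfl
    rw [this]
    exact Real.rpow_logb (by norm_num) (by norm_num) (by norm_num)
  set g : ℝ → ℝ := fun x =>
    if x = 0 then c else ((3 : ℝ) ^ x - 1) / ((2 : ℝ) ^ x - 1) with hgdef
  set F : ℝ → ℝ := fun t => if t = 1 then c else (t ^ c - 1) / (t - 1) with hFdef
  have hg : ∀ x : ℝ, g x = F ((2:ℝ) ^ x) := by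
    intro x
    rcases eq_or_ne x 0 with rfl | hx
    · simp [hgdef, hFdef]
    · have h2x1 : (2:ℝ) ^ x ≠ 1 := by
        rcases lt_or_gt_of_ne hx with h | h
        · exact ne_of_lt (Real.rpow_lt_one_of_one_lt_of_neg (by norm_num) h)
        · exact ne_of_gt (Real.one_lt_rpow_iff_of_pos (by norm_num) |>.mpr (Or.inl ⟨by norm_num, h⟩))
      have h3x : ((2:ℝ) ^ x) ^ c = (3:ℝ) ^ x := by
        rw [← Real.rpow_mul (by norm_num : (0:ℝ) ≤ 2), mul_comm,
          Real.rpow_mul (by norm_num : (0:ℝ) ≤ 2), h2c]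
      simp [hgdef, hFdef, hx, h2x1, h3x]
  have hmono : StrictMono g := by
    intro a b hab
    rw [hg a, hg b]
    exact pwm_F_mono hc (Real.rpow_pos_of_pos (by norm_num) a)
      (Real.rpow_pos_of_pos (by norm_num) b)
      ((Real.rpow_lt_rpow_left_iff (by norm_num : (1:ℝ) < 2)).mpr hab)
  have hinj : Set.InjOn g (Set.Iio 1) := hmono.injective.injOn
  refine ⟨hinj, ?_⟩
  rintro r ⟨ξ, hξ, hgξ⟩
  refine ⟨ξ, ⟨hξ, hgξ⟩, ?_⟩
  rintro y ⟨hy, hgy⟩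
  exact hinj hy hξ (hgy.trans hgξ.symm)
end
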